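/- arXiv:2405.19474 — 3 statements merged into one kernel-verified Lean document; each statement's English description precedes it below -/
import Mathlib

section
/- In a Cartesian k-differential category over a ℚ≥0-algebra k, T^(k)[T^(n)[f]] = T^(min(k,n))[f] for all k, n ∈ ℕ; in particular T^(n) is idempotent. -/
/-! A self-contained formalization of (Cartesian) `k`-differential categories. -/

universe u v w

/-- A Cartesian left `k`-linear category equipped with a differential combinator
satisfying the axioms **[CD.1]**–**[CD.7]**: a Cartesian `k`-differential category.
Composition `comp f g` is in diagrammatic order (`g ∘ f`). -/
structure CDC (k : Type w) [CommSemiring k] where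
  Obj : Type u
  Hom : Obj → Obj → Type v
  idm : ∀ A : Obj, Hom A A
  comp : ∀ {A B C : Obj}, Hom A B → Hom B C → Hom A C
  id_comp : ∀ {A B : Obj} (f : Hom A B), comp (idm A) f = f
  comp_id : ∀ {A B : Obj} (f : Hom A B), comp f (idm B) = f
  assoc : ∀ {A B C D : Obj} (f : Hom A B) (g : Hom B C) (h : Hom C D),
    comp (comp f g) h = comp f (comp g h)
  -- each homset is a `k`-module
  add : ∀ {A B : Obj}, Hom A B → Hom A B → Hom A B
  zero : ∀ {A B : Obj}, Hom A B
  smul : ∀ {A B : Obj}, k → Hom A B → Hom A B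
  add_assoc : ∀ {A B : Obj} (f g h : Hom A B), add (add f g) h = add f (add g h)
  add_comm : ∀ {A B : Obj} (f g : Hom A B), add f g = add g f
  zero_add : ∀ {A B : Obj} (f : Hom A B), add zero f = f
  one_smul : ∀ {A B : Obj} (f : Hom A B), smul 1 f = f
  mul_smul : ∀ {A B : Obj} (r s : k) (f : Hom A B), smul (r * s) f = smul r (smul s f)
  smul_add : ∀ {A B : Obj} (r : k) (f g : Hom A B), smul r (add f g) = add (smul r f) (smul r g)
  add_smul : ∀ {A B : Obj} (r s : k) (f : Hom A B), smul (r + s) f = add (smul r f) (smul s f)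
  zero_smul : ∀ {A B : Obj} (f : Hom A B), smul 0 f = zero
  smul_zero : ∀ {A B : Obj} (r : k), smul r (zero (A := A) (B := B)) = zero
  -- pre-composition is `k`-linear
  comp_add : ∀ {A B C : Obj} (x : Hom A B) (f g : Hom B C),
    comp x (add f g) = add (comp x f) (comp x g)
  comp_smul : ∀ {A B C : Obj} (x : Hom A B) (r : k) (f : Hom B C),
    comp x (smul r f) = smul r (comp x f)
  comp_zero : ∀ {A B C : Obj} (x : Hom A B), comp x (zero (A := B) (B := C)) = zero
  -- finite products
  prod : Obj → Obj → Obj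
  fst : ∀ {A B : Obj}, Hom (prod A B) A
  snd : ∀ {A B : Obj}, Hom (prod A B) B
  lift : ∀ {C A B : Obj}, Hom C A → Hom C B → Hom C (prod A B)
  lift_fst : ∀ {C A B : Obj} (f : Hom C A) (g : Hom C B), comp (lift f g) fst = f
  lift_snd : ∀ {C A B : Obj} (f : Hom C A) (g : Hom C B), comp (lift f g) snd = g
  lift_unique : ∀ {C A B : Obj} (h : Hom C (prod A B)), lift (comp h fst) (comp h snd) = h
  -- projections are `k`-linear
  fst_add : ∀ {C A B : Obj} (f g : Hom C (prod A B)),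
    comp (add f g) fst = add (comp f fst) (comp g fst)
  fst_smul : ∀ {C A B : Obj} (r : k) (f : Hom C (prod A B)),
    comp (smul r f) fst = smul r (comp f fst)
  snd_add : ∀ {C A B : Obj} (f g : Hom C (prod A B)),
    comp (add f g) snd = add (comp f snd) (comp g snd)
  snd_smul : ∀ {C A B : Obj} (r : k) (f : Hom C (prod A B)),
    comp (smul r f) snd = smul r (comp f snd)
  -- the differential combinator
  D : ∀ {A B : Obj}, Hom A B → Hom (prod A A) B
  CD1 : ∀ {A B : Obj} (r s : k) (f g : Hom A B),
    D (add (smul r f) (smul s g)) = add (smul r (D f)) (smul s (D g))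
  CD2 : ∀ {A B C : Obj} (f : Hom A B) (r s : k) (a b c : Hom C A),
    comp (lift a (add (smul r b) (smul s c))) (D f)
      = add (smul r (comp (lift a b) (D f))) (smul s (comp (lift a c) (D f)))
  CD3id : ∀ {A : Obj}, D (idm A) = snd
  CD3fst : ∀ {A B : Obj}, D (fst (A := A) (B := B)) = comp snd fst
  CD3snd : ∀ {A B : Obj}, D (snd (A := A) (B := B)) = comp snd snd
  CD4 : ∀ {A B C : Obj} (f : Hom A B) (g : Hom A C), D (lift f g) = lift (D f) (D g)
  CD5 : ∀ {A B C : Obj} (f : Hom A B) (g : Hom B C),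
    D (comp f g) = comp (lift (comp fst f) (D f)) (D g)
  CD6 : ∀ {A B C : Obj} (f : Hom A B) (a b : Hom C A),
    comp (lift (lift a zero) (lift zero b)) (D (D f)) = comp (lift a b) (D f)
  CD7 : ∀ {A B C : Obj} (f : Hom A B) (a b c d : Hom C A),
    comp (lift (lift a b) (lift c d)) (D (D f))
      = comp (lift (lift a c) (lift b d)) (D (D f))

namespace CDC

variable {k : Type w} [CommSemiring k]

/-- `pow A n` is the product `A × A^{×ⁿ}` (so `pow A 0 = A`), the domain of the
`n`-th derivative `∂⁽ⁿ⁾[f] : A × A^{×ⁿ} → B`. -/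
def pow (X : CDC k) (A : X.Obj) : ℕ → X.Obj
  | 0 => A
  | n + 1 => X.prod (X.pow A n) A

/-- `pad A n : A → A × A^{×ⁿ}` is `a ↦ (a, 0, …, 0)`. -/
def pad (X : CDC k) (A : X.Obj) : (n : ℕ) → X.Hom A (X.pow A n)
  | 0 => X.idm A
  | n + 1 => X.lift (X.pad A n) X.zero

/-- The `n`-th derivative `∂⁽ⁿ⁾[f] : A × A^{×ⁿ} → B`, defined inductively by
`∂⁽⁰⁾[f] = f` and `∂⁽ⁿ⁺¹⁾[f]` is the partial derivative of `∂⁽ⁿ⁾[f]` in its first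
argument (obtained by padding the direction vector with zeroes). -/
def pd (X : CDC k) {A B : X.Obj} : (n : ℕ) → X.Hom A B → X.Hom (X.pow A n) B
  | 0, f => f
  | n + 1, f =>
      X.comp (X.lift X.fst (X.comp X.snd (X.pad A n))) (X.D (X.pd n f))

/-- `diag A n : A → A × A^{×ⁿ}` is `x ↦ (0, x, …, x)`. -/
def diag (X : CDC k) (A : X.Obj) : (n : ℕ) → X.Hom A (X.pow A n)
  | 0 => X.zero
  | n + 1 => X.lift (X.diag A n) (X.idm A)

/-- A map `p` is a `D`-polynomial if `∂⁽ⁿ⁺¹⁾[p] = 0` for some `n`. -/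
def IsPoly (X : CDC k) {A B : X.Obj} (p : X.Hom A B) : Prop :=
  ∃ n : ℕ, X.pd (n + 1) p = X.zero

/-- The `D`-degree of `p`: the least `n` with `∂⁽ⁿ⁺¹⁾[p] = 0`. -/
noncomputable def deg (X : CDC k) {A B : X.Obj} (p : X.Hom A B) : ℕ :=
  sInf {n : ℕ | X.pd (n + 1) p = X.zero}

end CDC

/-- A Cartesian `k`-differential category over a commutative `ℚ≥0`-algebra `k`,
i.e. where every `n! ∈ k` is invertible. -/
structure QCDC (k : Type w) [CommSemiring k] extends CDC k where
  invFact : ℕ → k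
  invFact_spec : ∀ n : ℕ, (Nat.factorial n : k) * invFact n = 1

namespace QCDC

variable {k : Type w} [CommSemiring k]

/-- The `n`-th Taylor differential monomial `M⁽ⁿ⁾[f](x) = (1/n!) · ∂⁽ⁿ⁾[f](0, x, …, x)`. -/
def M (X : QCDC k) {A B : X.Obj} (n : ℕ) (f : X.Hom A B) : X.Hom A B :=
  X.smul (X.invFact n) (X.comp (X.toCDC.diag A n) (X.toCDC.pd n f))

/-- The `n`-th Taylor differential polynomial `T⁽ⁿ⁾[f] = Σ_{j=0}^n M⁽ʲ⁾[f]`. -/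
def T (X : QCDC k) {A B : X.Obj} : ℕ → X.Hom A B → X.Hom A B
  | 0, f => X.M 0 f
  | n + 1, f => X.add (X.T n f) (X.M (n + 1) f)

/-- The `D`-distance: `2^(-n)` for the least `n` where the Taylor monomials of `f` and `g`
disagree, and `0` if they all agree. -/
noncomputable def dD (X : QCDC k) {A B : X.Obj} (f g : X.Hom A B) : ℝ :=
  open Classical in
  if ∀ n : ℕ, X.M n f = X.M n g then 0
  else (2 : ℝ) ^ (-((sInf {n : ℕ | ¬ X.M n f = X.M n g} : ℕ) : ℤ))

/-- A Cartesian `k`-differential category is **Taylor** if maps are completely determined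
by their Taylor differential monomials. -/
def Taylor (X : QCDC k) : Prop :=
  ∀ (A B : X.Obj) (f g : X.Hom A B), (∀ n : ℕ, X.M n f = X.M n g) → f = g

end QCDC

attribute [reducible] CDC.pow

namespace CDC

variable {k : Type w} [CommSemiring k] {X : CDC k}

instance {A B : X.Obj} : Zero (X.Hom A B) := ⟨X.zero⟩
instance {A B : X.Obj} : Add (X.Hom A B) := ⟨X.add⟩
instance {A B : X.Obj} : SMul k (X.Hom A B) := ⟨X.smul⟩

lemma zero_def {A B : X.Obj} : (0 : X.Hom A B) = X.zero := rfl
lemma add_def {A B : X.Obj} (f g : X.Hom A B) : f + g = X.add f g := rfl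
lemma smul_def {A B : X.Obj} (r : k) (f : X.Hom A B) : r • f = X.smul r f := rfl

@[simp] lemma zero_def' {A B : X.Obj} : (X.zero : X.Hom A B) = 0 := rfl
@[simp] lemma add_def' {A B : X.Obj} (f g : X.Hom A B) : X.add f g = f + g := rfl
@[simp] lemma smul_def' {A B : X.Obj} (r : k) (f : X.Hom A B) : X.smul r f = r • f := rfl

instance {A B : X.Obj} : AddCommMonoid (X.Hom A B) where
  add_assoc := X.add_assoc
  zero_add := X.zero_add
  add_zero := fun f => by rw [add_def, X.add_comm]; exact X.zero_add f
  add_comm := X.add_comm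
  nsmul := nsmulRec

instance {A B : X.Obj} : MulAction k (X.Hom A B) where
  one_smul := X.one_smul
  mul_smul := X.mul_smul

instance {A B : X.Obj} : DistribMulAction k (X.Hom A B) where
  smul_zero := X.smul_zero
  smul_add := X.smul_add

instance {A B : X.Obj} : Module k (X.Hom A B) where
  add_smul := X.add_smul
  zero_smul := X.zero_smul

variable {A B C D E : X.Obj}

@[simp] lemma assoc' (f : X.Hom A B) (g : X.Hom B C) (h : X.Hom C D) :
    X.comp (X.comp f g) h = X.comp f (X.comp g h) := X.assoc f g h

@[simp] lemma id_comp' (f : X.Hom A B) : X.comp (X.idm A) f = f := X.id_comp f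
@[simp] lemma comp_id' (f : X.Hom A B) : X.comp f (X.idm B) = f := X.comp_id f

@[simp] lemma comp_add' (x : X.Hom A B) (f g : X.Hom B C) :
    X.comp x (f + g) = X.comp x f + X.comp x g := X.comp_add x f g
@[simp] lemma comp_smul' (x : X.Hom A B) (r : k) (f : X.Hom B C) :
    X.comp x (r • f) = r • X.comp x f := X.comp_smul x r f
@[simp] lemma comp_zero' (x : X.Hom A B) : X.comp x (0 : X.Hom B C) = 0 := X.comp_zero x

@[simp] lemma lift_fst' (f : X.Hom C A) (g : X.Hom C B) :
    X.comp (X.lift f g) X.fst = f := X.lift_fst f g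
@[simp] lemma lift_snd' (f : X.Hom C A) (g : X.Hom C B) :
    X.comp (X.lift f g) X.snd = g := X.lift_snd f g

@[simp] lemma lift_fst_assoc (f : X.Hom C A) (g : X.Hom C B) (h : X.Hom A D) :
    X.comp (X.lift f g) (X.comp X.fst h) = X.comp f h := by
  rw [← X.assoc, X.lift_fst]

@[simp] lemma lift_snd_assoc (f : X.Hom C A) (g : X.Hom C B) (h : X.Hom B D) :
    X.comp (X.lift f g) (X.comp X.snd h) = X.comp g h := by
  rw [← X.assoc, X.lift_snd]

lemma hom_ext {h h' : X.Hom C (X.prod A B)} (h1 : X.comp h X.fst = X.comp h' X.fst)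
    (h2 : X.comp h X.snd = X.comp h' X.snd) : h = h' := by
  rw [← X.lift_unique h, ← X.lift_unique h', h1, h2]

@[simp] lemma comp_lift (x : X.Hom D C) (f : X.Hom C A) (g : X.Hom C B) :
    X.comp x (X.lift f g) = X.lift (X.comp x f) (X.comp x g) := by
  apply hom_ext <;> simp

@[simp] lemma comp_lift_assoc {E : X.Obj} (x : X.Hom D C) (f : X.Hom C A) (g : X.Hom C B)
    (h : X.Hom (X.prod A B) E) :
    X.comp x (X.comp (X.lift f g) h) = X.comp (X.lift (X.comp x f) (X.comp x g)) h := by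
  rw [← X.assoc, comp_lift]

@[simp] lemma lift_fst_snd : X.lift (X.fst : X.Hom (X.prod A B) A) X.snd = X.idm _ := by
  apply hom_ext <;> simp

@[simp] lemma zero_comp_fst : X.comp (0 : X.Hom C (X.prod A B)) X.fst = 0 := by
  have h := X.fst_smul (0:k) (0 : X.Hom C (X.prod A B))
  simpa [← smul_def] using h

@[simp] lemma zero_comp_snd : X.comp (0 : X.Hom C (X.prod A B)) X.snd = 0 := by
  have h := X.snd_smul (0:k) (0 : X.Hom C (X.prod A B))
  simpa [← smul_def] using h

lemma lift_add (a c : X.Hom C A) (b d : X.Hom C B) :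
    X.lift a b + X.lift c d = X.lift (a + c) (b + d) := by
  apply hom_ext
  · rw [add_def, X.fst_add]; simp [← add_def]
  · rw [add_def, X.snd_add]; simp [← add_def]

lemma lift_smul (r : k) (a : X.Hom C A) (b : X.Hom C B) :
    r • X.lift a b = X.lift (r • a) (r • b) := by
  apply hom_ext
  · rw [smul_def, X.fst_smul]; simp [← smul_def]
  · rw [smul_def, X.snd_smul]; simp [← smul_def]

@[simp] lemma lift_zero_zero : (X.lift 0 0 : X.Hom C (X.prod A B)) = 0 := by
  apply hom_ext <;> simp

/-- The differential combinator is additive. -/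
lemma D_add (f g : X.Hom A B) : X.D (f + g) = X.D f + X.D g := by
  have := X.CD1 (1:k) 1 f g
  simpa [← smul_def, ← add_def] using this

lemma D_smul (r : k) (f : X.Hom A B) : X.D (r • f) = r • X.D f := by
  have := X.CD1 r 0 f f
  simpa [← smul_def, ← add_def] using this

@[simp] lemma D_zero : X.D (0 : X.Hom A B) = 0 := by
  have := X.CD1 (0:k) 0 (0 : X.Hom A B) 0
  simpa [← smul_def, ← add_def] using this

/-- Additivity of the derivative in the direction argument. -/
lemma D_dir_add (f : X.Hom A B) (a : X.Hom C A) (b c : X.Hom C A) :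
    X.comp (X.lift a (b + c)) (X.D f)
      = X.comp (X.lift a b) (X.D f) + X.comp (X.lift a c) (X.D f) := by
  have := X.CD2 f (1:k) 1 a b c
  simpa [← smul_def, ← add_def] using this

lemma D_dir_smul (f : X.Hom A B) (a : X.Hom C A) (r : k) (b : X.Hom C A) :
    X.comp (X.lift a (r • b)) (X.D f) = r • X.comp (X.lift a b) (X.D f) := by
  have := X.CD2 f r (0:k) a b b
  simpa [← smul_def, ← add_def] using this

@[simp] lemma D_dir_zero (f : X.Hom A B) (a : X.Hom C A) :
    X.comp (X.lift a 0) (X.D f) = 0 := by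
  have := X.CD2 f (0:k) 0 a 0 0
  simpa [← smul_def, ← add_def] using this

end CDC
namespace CDC

variable {k : Type w} [CommSemiring k] {X : CDC k}
variable {A B C D : X.Obj}

/-- A map is *linear* when its derivative is the projection onto the direction,
and precomposition with it is additive. -/
structure Lin (u : X.Hom A B) : Prop where
  d : X.D u = X.comp X.snd u
  ladd : ∀ {C : X.Obj} (a b : X.Hom C A), X.comp (a + b) u = X.comp a u + X.comp b u
  lzero : ∀ {C : X.Obj}, X.comp (0 : X.Hom C A) u = 0

lemma lin_id : Lin (X.idm A) := ⟨by simpa using X.CD3id, by simp, by simp⟩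

lemma lin_fst : Lin (X.fst : X.Hom (X.prod A B) A) :=
  ⟨X.CD3fst, fun a b => by rw [add_def, X.fst_add]; rfl, by simp⟩

lemma lin_snd : Lin (X.snd : X.Hom (X.prod A B) B) :=
  ⟨X.CD3snd, fun a b => by rw [add_def, X.snd_add]; rfl, by simp⟩

lemma lin_zero : Lin (0 : X.Hom A B) := ⟨by simp, by simp, by simp⟩

lemma lin_comp {u : X.Hom A B} {v : X.Hom B C} (hu : Lin u) (hv : Lin v) :
    Lin (X.comp u v) := by
  refine ⟨?_, fun a b => ?_, ?_⟩
  · rw [X.CD5, hu.d, hv.d, ← X.assoc]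
    simp
  · rw [← X.assoc, ← X.assoc, ← X.assoc, hu.ladd, hv.ladd]
  · intro C'
    rw [← X.assoc, hu.lzero, hv.lzero]

lemma lin_lift {u : X.Hom C A} {v : X.Hom C B} (hu : Lin u) (hv : Lin v) :
    Lin (X.lift u v) := by
  refine ⟨?_, fun a b => ?_, ?_⟩
  · rw [X.CD4, hu.d, hv.d, comp_lift]
  · rw [comp_lift, comp_lift, comp_lift, lift_add, hu.ladd, hv.ladd]
  · intro C'
    rw [comp_lift, hu.lzero, hv.lzero, lift_zero_zero]

/-- Chain rule along a linear map. -/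
lemma Lin.chain {u : X.Hom A B} (hu : Lin u) (h : X.Hom B C) :
    X.D (X.comp u h) = X.comp (X.lift (X.comp X.fst u) (X.comp X.snd u)) (X.D h) := by
  rw [X.CD5, hu.d]

lemma lin_pad (n : ℕ) : Lin (X.pad A n) := by
  induction n with
  | zero => exact lin_id
  | succ n ih => exact lin_lift ih lin_zero

lemma lin_diag (n : ℕ) : Lin (X.diag A n) := by
  induction n with
  | zero => exact lin_zero
  | succ n ih => exact lin_lift ih lin_id

/-- the unit vector at slot `i` (counted from the right). -/
def e (X : CDC k) (A : X.Obj) : (n i : ℕ) → X.Hom A (X.pow A n)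
  | 0, _ => 0
  | _ + 1, 0 => X.lift 0 (X.idm A)
  | n + 1, i + 1 => X.lift (e X A n i) 0

/-- substitution into slot `i` (from the right). -/
def s (X : CDC k) (A : X.Obj) : (n i : ℕ) → X.Hom (X.prod (X.pow A n) A) (X.pow A n)
  | 0, _ => X.fst
  | _ + 1, 0 => X.lift (X.comp X.fst X.fst) X.snd
  | n + 1, i + 1 =>
      X.lift (X.comp (X.lift (X.comp X.fst X.fst) X.snd) (s X A n i)) (X.comp X.fst X.snd)

/-- zeroing out slot `i` (from the right). -/
def z (X : CDC k) (A : X.Obj) : (n i : ℕ) → X.Hom (X.pow A n) (X.pow A n)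
  | 0, _ => X.idm A
  | _ + 1, 0 => X.lift X.fst 0
  | n + 1, i + 1 => X.lift (X.comp X.fst (z X A n i)) X.snd

/-- swapping slots `i` and `i+1` (from the right). -/
def w (X : CDC k) (A : X.Obj) : (n i : ℕ) → X.Hom (X.pow A n) (X.pow A n)
  | 0, _ => X.idm A
  | 1, _ => X.idm _
  | _ + 2, 0 => X.lift (X.lift (X.comp X.fst X.fst) X.snd) (X.comp X.fst X.snd)
  | n + 2, i + 1 => X.lift (X.comp X.fst (w X A (n + 1) i)) X.snd

/-- the point of `pow Y m` with base `b` and all `m` directions equal to `d`. -/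
def pt (X : CDC k) {C Y : X.Obj} : (m : ℕ) → X.Hom C Y → X.Hom C Y → X.Hom C (X.pow Y m)
  | 0, b, _ => b
  | m + 1, b, d => X.lift (pt X m b d) d

/-- base point: `x` on the leftmost `n - t` slots, `0` on the last `t` slots. -/
def beta (X : CDC k) (A : X.Obj) : (n t : ℕ) → X.Hom A (X.pow A n)
  | n, 0 => X.diag A n
  | 0, _ + 1 => 0
  | n + 1, t + 1 => X.lift (beta X A n t) 0

/-- direction: `x` on the last `t` slots, `0` elsewhere (including the base). -/
def pii (X : CDC k) (A : X.Obj) : (n t : ℕ) → X.Hom A (X.pow A n)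
  | _, 0 => 0
  | 0, _ + 1 => 0
  | n + 1, t + 1 => X.lift (pii X A n t) (X.idm A)

/-- componentwise application of `u`. -/
def Pm (X : CDC k) {A B : X.Obj} (u : X.Hom A B) : (m : ℕ) → X.Hom (X.pow A m) (X.pow B m)
  | 0 => u
  | m + 1 => X.lift (X.comp X.fst (Pm X u m)) (X.comp X.snd u)

lemma lin_e (n i : ℕ) : Lin (X.e A n i) := by
  induction n generalizing i with
  | zero => exact lin_zero
  | succ n ih =>
    cases i with
    | zero => exact lin_lift lin_zero lin_id
    | succ i => exact lin_lift (ih i) lin_zero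

lemma lin_s (n i : ℕ) : Lin (X.s A n i) := by
  induction n generalizing i with
  | zero => exact lin_fst
  | succ n ih =>
    cases i with
    | zero => exact lin_lift (lin_comp lin_fst lin_fst) lin_snd
    | succ i =>
      exact lin_lift (lin_comp (lin_lift (lin_comp lin_fst lin_fst) lin_snd) (ih i))
        (lin_comp lin_fst lin_snd)

lemma lin_z (n i : ℕ) : Lin (X.z A n i) := by
  induction n generalizing i with
  | zero => exact lin_id
  | succ n ih =>
    cases i with
    | zero => exact lin_lift lin_fst lin_zero
    | succ i => exact lin_lift (lin_comp lin_fst (ih i)) lin_snd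

lemma lin_w (n i : ℕ) : Lin (X.w A n i) := by
  induction n generalizing i with
  | zero => exact lin_id
  | succ n ih =>
    cases n with
    | zero => exact lin_id
    | succ n =>
      cases i with
      | zero =>
        exact lin_lift (lin_lift (lin_comp lin_fst lin_fst) lin_snd) (lin_comp lin_fst lin_snd)
      | succ i => exact lin_lift (lin_comp lin_fst (ih i)) lin_snd

lemma lin_pt {C Y : X.Obj} {b d : X.Hom C Y} (hb : Lin b) (hd : Lin d) (m : ℕ) :
    Lin (X.pt m b d) := by
  induction m with
  | zero => exact hb
  | succ m ih => exact lin_lift ih hd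

lemma lin_Pm {u : X.Hom A B} (hu : Lin u) (m : ℕ) : Lin (X.Pm u m) := by
  induction m with
  | zero => exact hu
  | succ m ih => exact lin_lift (lin_comp lin_fst ih) (lin_comp lin_snd hu)

lemma lin_beta (n t : ℕ) : Lin (X.beta A n t) := by
  induction n generalizing t with
  | zero => cases t with
    | zero => exact lin_zero
    | succ t => exact lin_zero
  | succ n ih =>
    cases t with
    | zero => exact lin_diag _
    | succ t => exact lin_lift (ih t) lin_zero

lemma lin_pii (n t : ℕ) : Lin (X.pii A n t) := by
  induction n generalizing t with
  | zero => cases t with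
    | zero => exact lin_zero
    | succ t => exact lin_zero
  | succ n ih =>
    cases t with
    | zero => exact lin_zero
    | succ t => exact lin_lift (ih t) lin_id

@[simp] lemma comp_pt {C C' Y : X.Obj} (x : X.Hom C' C) (b d : X.Hom C Y) (m : ℕ) :
    X.comp x (X.pt m b d) = X.pt m (X.comp x b) (X.comp x d) := by
  induction m with
  | zero => rfl
  | succ m ih => simp [pt, ih]

lemma pt_zero_dir {C Y : X.Obj} (b : X.Hom C Y) (m : ℕ) :
    X.pt m b 0 = X.comp b (X.pad Y m) := by
  induction m with
  | zero => simp [pt, pad]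
  | succ m ih => simp [pt, pad, ih]

end CDC
namespace CDC
variable {k : Type w} [CommSemiring k] {X : CDC k} {A B C D : X.Obj}

lemma pad_zero' : X.pad A 0 = X.idm A := rfl
lemma pad_succ (n : ℕ) : X.pad A (n+1) = X.lift (X.pad A n) 0 := rfl
lemma diag_zero' : X.diag A 0 = 0 := rfl
lemma diag_succ (n : ℕ) : X.diag A (n+1) = X.lift (X.diag A n) (X.idm A) := rfl
lemma e_zero (n : ℕ) : X.e A (n+1) 0 = X.lift 0 (X.idm A) := rfl
lemma e_succ (n i : ℕ) : X.e A (n+1) (i+1) = X.lift (X.e A n i) 0 := rfl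
lemma s_zero' (n : ℕ) : X.s A (n+1) 0 = X.lift (X.comp X.fst X.fst) X.snd := rfl
lemma s_succ (n i : ℕ) : X.s A (n+1) (i+1)
    = X.lift (X.comp (X.lift (X.comp X.fst X.fst) X.snd) (X.s A n i)) (X.comp X.fst X.snd) := rfl
lemma z_zero (n : ℕ) : X.z A (n+1) 0 = X.lift X.fst 0 := rfl
lemma z_succ (n i : ℕ) : X.z A (n+1) (i+1) = X.lift (X.comp X.fst (X.z A n i)) X.snd := rfl
lemma w_zero (n : ℕ) : X.w A (n+2) 0
    = X.lift (X.lift (X.comp X.fst X.fst) X.snd) (X.comp X.fst X.snd) := rfl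
lemma w_succ (n i : ℕ) : X.w A (n+2) (i+1) = X.lift (X.comp X.fst (X.w A (n+1) i)) X.snd := rfl
lemma pii_zero (n : ℕ) : X.pii A n 0 = 0 := by cases n <;> rfl
lemma pii_succ (n t : ℕ) : X.pii A (n+1) (t+1) = X.lift (X.pii A n t) (X.idm A) := rfl
lemma beta_zero (n : ℕ) : X.beta A n 0 = X.diag A n := by cases n <;> rfl
lemma beta_succ (n t : ℕ) : X.beta A (n+1) (t+1) = X.lift (X.beta A n t) 0 := rfl
lemma pt_zero (b d : X.Hom C A) : X.pt 0 b d = b := rfl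
lemma pt_succ (m : ℕ) (b d : X.Hom C A) : X.pt (m+1) b d = X.lift (X.pt m b d) d := rfl
lemma Pm_zero (u : X.Hom A B) : X.Pm u 0 = u := rfl
lemma Pm_succ (u : X.Hom A B) (m : ℕ) :
    X.Pm u (m+1) = X.lift (X.comp X.fst (X.Pm u m)) (X.comp X.snd u) := rfl

end CDC
namespace CDC

variable {k : Type w} [CommSemiring k] {X : CDC k}
variable {A B C D : X.Obj}

lemma pd_succ (n : ℕ) (f : X.Hom A B) :
    X.pd (n+1) f
      = X.comp (X.lift X.fst (X.comp X.snd (X.pad A n))) (X.D (X.pd n f)) := rfl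

lemma lin_L (n : ℕ) : Lin (X.lift X.fst (X.comp X.snd (X.pad A n)) :
    X.Hom (X.pow A (n+1)) (X.prod (X.pow A n) (X.pow A n))) :=
  lin_lift lin_fst (lin_comp lin_snd (lin_pad n))

@[simp] lemma zero_comp_pad (n : ℕ) : X.comp (0 : X.Hom C A) (X.pad A n) = 0 :=
  (lin_pad n).lzero
@[simp] lemma zero_comp_diag (n : ℕ) : X.comp (0 : X.Hom C A) (X.diag A n) = 0 :=
  (lin_diag n).lzero
@[simp] lemma zero_comp_e (n i : ℕ) : X.comp (0 : X.Hom C A) (X.e A n i) = 0 :=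
  (lin_e n i).lzero
@[simp] lemma zero_comp_z (n i : ℕ) : X.comp (0 : X.Hom C (X.pow A n)) (X.z A n i) = 0 :=
  (lin_z n i).lzero
@[simp] lemma zero_comp_w (n i : ℕ) : X.comp (0 : X.Hom C (X.pow A n)) (X.w A n i) = 0 :=
  (lin_w n i).lzero
@[simp] lemma zero_comp_s (n i : ℕ) :
    X.comp (0 : X.Hom C (X.prod (X.pow A n) A)) (X.s A n i) = 0 :=
  (lin_s n i).lzero

lemma pd_add (n : ℕ) (f g : X.Hom A B) : X.pd n (f + g) = X.pd n f + X.pd n g := by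
  induction n with
  | zero => rfl
  | succ n ih => rw [pd_succ, pd_succ, pd_succ, ih, D_add, comp_add']

lemma pd_smul (n : ℕ) (r : k) (f : X.Hom A B) : X.pd n (r • f) = r • X.pd n f := by
  induction n with
  | zero => rfl
  | succ n ih => rw [pd_succ, pd_succ, ih, D_smul, comp_smul']

lemma pd_zero (n : ℕ) : X.pd n (0 : X.Hom A B) = 0 := by
  induction n with
  | zero => rfl
  | succ n ih => rw [pd_succ, ih, D_zero, comp_zero']

lemma pad_Pm {u : X.Hom A B} (hu : Lin u) (m : ℕ) :
    X.comp (X.pad A m) (X.Pm u m) = X.comp u (X.pad B m) := by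
  induction m with
  | zero => rw [pad_zero', pad_zero', Pm_zero, X.id_comp, X.comp_id]
  | succ m ih =>
    simp only [pad_succ, Pm_succ, comp_lift, lift_fst_assoc, lift_snd_assoc, ih, comp_zero']
    rw [hu.lzero]

lemma diag_Pm {u : X.Hom A B} (hu : Lin u) (m : ℕ) :
    X.comp (X.diag A m) (X.Pm u m) = X.pt m 0 u := by
  induction m with
  | zero => rw [diag_zero', Pm_zero, pt_zero, hu.lzero]
  | succ m ih => simp [diag_succ, Pm_succ, pt_succ, ih]

lemma pd_comp_lin {u : X.Hom A B} (hu : Lin u) (m : ℕ) (h : X.Hom B C) :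
    X.pd m (X.comp u h) = X.comp (X.Pm u m) (X.pd m h) := by
  induction m with
  | zero => rfl
  | succ m ih =>
    have h1 : X.comp (X.lift X.fst (X.comp X.snd (X.pad A m)))
        (X.lift (X.comp X.fst (X.Pm u m)) (X.comp X.snd (X.Pm u m)))
        = X.comp (X.Pm u (m+1)) (X.lift X.fst (X.comp X.snd (X.pad B m))) := by
      simp [Pm_succ, pad_Pm hu]
    rw [pd_succ, pd_succ, ih, (lin_Pm hu m).chain, ← X.assoc, h1, X.assoc]

lemma Pm_pd {σ : X.Hom A A} (hσ : Lin σ) {g : X.Hom A B} (hg : X.comp σ g = g) (m : ℕ) :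
    X.comp (X.Pm σ m) (X.pd m g) = X.pd m g := by
  induction m with
  | zero => exact hg
  | succ m ih =>
    have h1 : X.comp (X.Pm σ (m+1)) (X.lift X.fst (X.comp X.snd (X.pad A m)))
        = X.comp (X.lift X.fst (X.comp X.snd (X.pad A m)))
            (X.lift (X.comp X.fst (X.Pm σ m)) (X.comp X.snd (X.Pm σ m))) := by
      simp [Pm_succ, ← pad_Pm hσ]
    rw [pd_succ, ← X.assoc, h1, X.assoc, ← (lin_Pm hσ m).chain, ih]

lemma pad_w (n i : ℕ) : X.comp (X.pad A n) (X.w A n i) = X.pad A n := by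
  induction n generalizing i with
  | zero => exact X.comp_id _
  | succ n ih =>
    cases n with
    | zero => exact X.comp_id _
    | succ n =>
      cases i with
      | zero => simp [w_zero, pad_succ]
      | succ i => rw [pad_succ, w_succ]; simp [ih]

lemma pad_z (n i : ℕ) : X.comp (X.pad A n) (X.z A n i) = X.pad A n := by
  induction n generalizing i with
  | zero => exact X.comp_id _
  | succ n ih =>
    cases i with
    | zero => simp [z_zero, pad_succ]
    | succ i => rw [pad_succ, z_succ]; simp [ih]

lemma sub_zero_right (n i : ℕ) (d : X.Hom C (X.pow A n)) :
    X.comp (X.lift d 0) (X.s A n i) = X.comp d (X.z A n i) := by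
  induction n generalizing i with
  | zero => exact X.lift_fst d 0 |>.trans (X.comp_id d).symm
  | succ n ih =>
    cases i with
    | zero => simp [s_zero', z_zero]
    | succ i => simp [s_succ, z_succ, ih]

lemma w_pd (n i : ℕ) (f : X.Hom A B) :
    X.comp (X.w A n i) (X.pd n f) = X.pd n f := by
  induction n generalizing i with
  | zero => exact X.id_comp _
  | succ n ih =>
    cases n with
    | zero => exact X.id_comp _
    | succ n =>
      cases i with
      | zero =>
        have e1 : X.pd (n+2) f
            = X.comp (X.lift
                (X.lift (X.comp X.fst X.fst) (X.comp X.fst (X.comp X.snd (X.pad A n))))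
                (X.lift (X.comp X.snd (X.pad A n)) (0 : X.Hom (X.pow A (n+2)) (X.pow A n))))
              (X.D (X.D (X.pd n f))) := by
          rw [pd_succ, pd_succ, (lin_L n).chain]
          simp [pad_succ]
        have e2 : X.comp (X.w A (n+2) 0)
            (X.lift
                (X.lift (X.comp X.fst X.fst) (X.comp X.fst (X.comp X.snd (X.pad A n))))
                (X.lift (X.comp X.snd (X.pad A n)) (0 : X.Hom (X.pow A (n+2)) (X.pow A n))))
            = X.lift
                (X.lift (X.comp X.fst X.fst) (X.comp X.snd (X.pad A n)))
                (X.lift (X.comp X.fst (X.comp X.snd (X.pad A n)))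
                  (0 : X.Hom (X.pow A (n+2)) (X.pow A n))) := by
          simp [w_zero]
        rw [e1, ← X.assoc, e2]
        exact X.CD7 (X.pd n f) _ _ _ _
      | succ i =>
        have hD := congrArg X.D (ih i)
        rw [(lin_w (n+1) i).chain] at hD
        have h2 : X.comp (X.w A (n+2) (i+1)) (X.lift X.fst (X.comp X.snd (X.pad A (n+1))))
            = X.comp (X.lift X.fst (X.comp X.snd (X.pad A (n+1))))
                (X.lift (X.comp X.fst (X.w A (n+1) i)) (X.comp X.snd (X.w A (n+1) i))) := by
          simp [w_succ, pad_w]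
        rw [pd_succ, ← X.assoc, h2, X.assoc, hD]

lemma beta_self (n : ℕ) : X.beta A n n = 0 := by
  induction n with
  | zero => rfl
  | succ n ih => simp [beta_succ, ih]

lemma pii_self (n : ℕ) : X.pii A n n = X.diag A n := by
  induction n with
  | zero => rfl
  | succ n ih => rw [pii_succ, ih, diag_succ]

lemma pii_split (n u : ℕ) : X.pii A n (u+1) = X.e A n u + X.pii A n u := by
  induction n generalizing u with
  | zero => cases u <;> simp [pii, e]
  | succ n ih =>
    cases u with
    | zero => rw [pii_succ, pii_zero, pii_zero, e_zero, add_zero]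
    | succ u => rw [pii_succ, ih, e_succ, pii_succ, lift_add]; simp

lemma beta_pd_zero (n t : ℕ) (f : X.Hom A B) :
    X.comp (X.beta A (n+1) (t+1)) (X.pd (n+1) f) = 0 := by
  have h : X.comp (X.beta A (n+1) (t+1)) (X.lift X.fst (X.comp X.snd (X.pad A n)))
      = X.lift (X.beta A n t) 0 := by
    simp [beta_succ]
  rw [pd_succ, ← X.assoc, h, D_dir_zero]

end CDC
namespace CDC

variable {k : Type w} [CommSemiring k] {X : CDC k}
variable {A B C D : X.Obj}

lemma D_dir_split {E : X.Obj} (h : X.Hom (X.prod A B) E) (P : X.Hom C (X.prod A B))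
    (b : X.Hom C A) (c : X.Hom C B) :
    X.comp (X.lift P (X.lift b c)) (X.D h)
      = X.comp (X.lift P (X.lift b 0)) (X.D h) + X.comp (X.lift P (X.lift 0 c)) (X.D h) := by
  rw [← D_dir_add, lift_add]
  simp

lemma DD_dir_zero2 (g : X.Hom A B) (a c : X.Hom C A) :
    X.comp (X.lift (X.lift a 0) (X.lift c 0)) (X.D (X.D g)) = 0 := by
  rw [X.CD7]
  simp

lemma CD6' (g : X.Hom A B) (a b : X.Hom C A) :
    X.comp (X.lift (X.lift a 0) (X.lift 0 b)) (X.D (X.D g)) = X.comp (X.lift a b) (X.D g) := by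
  have h := X.CD6 g a b
  simpa using h

/-- Substitution lemma: the derivative of `∂⁽ⁿ⁾[f]` in a single direction slot
is substitution into that slot. -/
lemma subst (n i : ℕ) (f : X.Hom A B) (hi : i < n) :
    X.comp (X.lift X.fst (X.comp X.snd (X.e A n i))) (X.D (X.pd n f))
      = X.comp (X.s A n i) (X.pd n f) := by
  induction n generalizing i with
  | zero => omega
  | succ n ih =>
    cases i with
    | zero =>
      rw [pd_succ, (lin_L n).chain]
      simp only [e_zero, comp_lift, comp_lift_assoc, lift_fst_assoc, lift_snd_assoc,
        lift_fst', lift_snd', comp_zero', comp_id', assoc', zero_comp_pad]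
      rw [X.CD7, D_dir_split, DD_dir_zero2, CD6']
      simp [s_zero']
    | succ i =>
      have hD := congrArg X.D (ih i (Nat.lt_of_succ_lt_succ hi))
      rw [(lin_lift lin_fst (lin_comp lin_snd (lin_e n i))).chain, (lin_s n i).chain] at hD
      have h3 := congrArg (X.comp
        (X.lift (X.lift (X.comp X.fst X.fst) X.snd)
          (X.lift (X.comp X.fst (X.comp X.snd (X.pad A n)))
            (0 : X.Hom (X.prod (X.pow A (n+1)) A) A)))) hD
      simp only [comp_lift, comp_lift_assoc, lift_fst_assoc, lift_snd_assoc,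
        lift_fst', lift_snd', comp_zero', comp_id', assoc', zero_comp_pad, zero_comp_e,
        sub_zero_right, pad_z] at h3
      rw [pd_succ, (lin_L n).chain]
      simp only [e_succ, s_succ, comp_lift, comp_lift_assoc, lift_fst_assoc, lift_snd_assoc,
        lift_fst', lift_snd', comp_zero', comp_id', assoc', zero_comp_pad, zero_comp_e,
        sub_zero_right, pad_z]
      rw [X.CD7]
      exact h3

end CDC
namespace CDC

variable {k : Type w} [CommSemiring k] {X : CDC k}
variable {A B C D : X.Obj}

@[simp] lemma zero_comp_e_assoc {E : X.Obj} (n i : ℕ) (h : X.Hom (X.pow A n) E) :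
    X.comp (0 : X.Hom C A) (X.comp (X.e A n i) h) = X.comp (0 : X.Hom C (X.pow A n)) h := by
  rw [← X.assoc, zero_comp_e]

@[simp] lemma zero_comp_pad_assoc {E : X.Obj} (n : ℕ) (h : X.Hom (X.pow A n) E) :
    X.comp (0 : X.Hom C A) (X.comp (X.pad A n) h) = X.comp (0 : X.Hom C (X.pow A n)) h := by
  rw [← X.assoc, zero_comp_pad]

@[simp] lemma zero_comp_z_assoc {E : X.Obj} (n i : ℕ) (h : X.Hom (X.pow A n) E) :
    X.comp (0 : X.Hom C (X.pow A n)) (X.comp (X.z A n i) h)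
      = X.comp (0 : X.Hom C (X.pow A n)) h := by
  rw [← X.assoc, zero_comp_z]

@[simp] lemma zero_comp_s_assoc {E : X.Obj} (n i : ℕ) (h : X.Hom (X.pow A n) E) :
    X.comp (0 : X.Hom C (X.prod (X.pow A n) A)) (X.comp (X.s A n i) h)
      = X.comp (0 : X.Hom C (X.pow A n)) h := by
  rw [← X.assoc, zero_comp_s]

/-- Iterated substitution lemma. -/
lemma substS (m n i : ℕ) (f : X.Hom A B) (hi : i < n) :
    X.comp (X.lift (X.pt m (X.comp X.fst X.fst) (X.comp X.fst X.snd))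
        (X.comp (X.comp X.snd (X.e A n i)) (X.pad (X.pow A n) m)))
      (X.D (X.pd m (X.pd n f)))
    = X.comp (X.pt m (X.comp (X.lift (X.comp X.fst X.fst) X.snd) (X.s A n i))
        (X.comp (X.comp X.fst X.snd) (X.z A n i)))
      (X.pd m (X.pd n f)) := by
  induction m with
  | zero =>
    have h := congrArg (X.comp (X.lift (X.comp X.fst X.fst) X.snd
      : X.Hom (X.prod (X.prod (X.pow A n) (X.pow A n)) A) (X.prod (X.pow A n) A)))
      (subst n i f hi)
    simpa [pt_zero, pad_zero', pd] using h
  | succ m ih =>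
    have hα : Lin (X.lift (X.pt m (X.comp X.fst X.fst
          : X.Hom (X.prod (X.prod (X.pow A n) (X.pow A n)) A) (X.pow A n)) (X.comp X.fst X.snd))
        (X.comp (X.comp X.snd (X.e A n i)) (X.pad (X.pow A n) m))) :=
      lin_lift (lin_pt (lin_comp lin_fst lin_fst) (lin_comp lin_fst lin_snd) m)
        (lin_comp (lin_comp lin_snd (lin_e n i)) (lin_pad m))
    have hβ : Lin (X.pt m (X.comp (X.lift (X.comp X.fst X.fst) X.snd
          : X.Hom (X.prod (X.prod (X.pow A n) (X.pow A n)) A) (X.prod (X.pow A n) A)) (X.s A n i))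
        (X.comp (X.comp X.fst X.snd) (X.z A n i))) :=
      lin_pt (lin_comp (lin_lift (lin_comp lin_fst lin_fst) lin_snd) (lin_s n i))
        (lin_comp (lin_comp lin_fst lin_snd) (lin_z n i)) m
    have hD := congrArg X.D ih
    rw [hα.chain, hβ.chain] at hD
    have h3 := congrArg (X.comp
      (X.lift (X.idm (X.prod (X.prod (X.pow A n) (X.pow A n)) A))
        (X.lift (X.lift (X.comp X.fst X.snd)
            (0 : X.Hom (X.prod (X.prod (X.pow A n) (X.pow A n)) A) (X.pow A n)))
          (0 : X.Hom (X.prod (X.prod (X.pow A n) (X.pow A n)) A) A)))) hD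
    simp only [comp_lift, comp_lift_assoc, lift_fst_assoc, lift_snd_assoc, lift_fst',
      lift_snd', comp_zero', comp_id', id_comp', assoc', zero_comp_pad, zero_comp_e,
      zero_comp_z, zero_comp_e_assoc, zero_comp_pad_assoc, zero_comp_z_assoc,
      comp_pt, pt_zero_dir, pt_succ, pad_succ, sub_zero_right, zero_comp_s] at h3
    rw [pd_succ, (lin_L (X := X) (A := X.pow A n) m).chain]
    simp only [comp_lift, comp_lift_assoc, lift_fst_assoc, lift_snd_assoc, lift_fst',
      lift_snd', comp_zero', comp_id', id_comp', assoc', zero_comp_pad, zero_comp_e,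
      zero_comp_z, zero_comp_e_assoc, zero_comp_pad_assoc, zero_comp_z_assoc,
      comp_pt, pt_zero_dir, pt_succ, pad_succ, sub_zero_right, zero_comp_s]
    rw [X.CD7]
    exact h3

end CDC
namespace CDC

variable {k : Type w} [CommSemiring k] {X : CDC k}
variable {A B C D : X.Obj}

lemma pd_zero' (h : X.Hom A B) : X.pd 0 h = h := rfl

lemma pt_Pm {Y : X.Obj} (m : ℕ) (b d : X.Hom C A) (u : X.Hom A Y) :
    X.comp (X.pt m b d) (X.Pm u m) = X.pt m (X.comp b u) (X.comp d u) := by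
  induction m with
  | zero => rfl
  | succ m ih => rw [pt_succ, pt_succ, Pm_succ]; simp [ih]

lemma pt_perm {σ : X.Hom A A} (hσ : Lin σ) {g : X.Hom A B} (hg : X.comp σ g = g)
    (m : ℕ) (b d : X.Hom C A) :
    X.comp (X.pt m (X.comp b σ) (X.comp d σ)) (X.pd m g)
      = X.comp (X.pt m b d) (X.pd m g) := by
  rw [← pt_Pm, X.assoc, Pm_pd hσ hg]

/-- the base pattern `β_{t+1}` with `x` substituted into (0-free) slot `i`. -/
def bpat (X : CDC k) (A : X.Obj) : (n t i : ℕ) → X.Hom A (X.pow A n)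
  | 0, _, _ => 0
  | n + 1, t, 0 => X.lift (X.beta A n t) (X.idm A)
  | _ + 1, 0, _ + 1 => 0
  | n + 1, t + 1, i + 1 => X.lift (bpat X A n t i) 0

/-- the direction pattern `π_{t+1}` with slot `i` zeroed out. -/
def ppat (X : CDC k) (A : X.Obj) : (n t i : ℕ) → X.Hom A (X.pow A n)
  | 0, _, _ => 0
  | n + 1, t, 0 => X.lift (X.pii A n t) 0
  | _ + 1, 0, _ + 1 => 0
  | n + 1, t + 1, i + 1 => X.lift (ppat X A n t i) (X.idm A)

lemma bpat_zero (n t : ℕ) : X.bpat A (n+1) t 0 = X.lift (X.beta A n t) (X.idm A) := by cases t <;> rfl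
lemma bpat_succ (n t i : ℕ) : X.bpat A (n+1) (t+1) (i+1) = X.lift (X.bpat A n t i) 0 := rfl
lemma ppat_zero (n t : ℕ) : X.ppat A (n+1) t 0 = X.lift (X.pii A n t) 0 := by cases t <;> rfl
lemma ppat_succ (n t i : ℕ) : X.ppat A (n+1) (t+1) (i+1) = X.lift (X.ppat A n t i) (X.idm A) := rfl

lemma s_beta (n t i : ℕ) (hit : i ≤ t) (htn : t < n) :
    X.comp (X.lift (X.beta A n (t+1)) (X.idm A)) (X.s A n i) = X.bpat A n t i := by
  induction n generalizing t i with
  | zero => omega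
  | succ n ih =>
    cases i with
    | zero => simp [beta_succ, s_zero', bpat_zero]
    | succ i =>
      cases t with
      | zero => omega
      | succ t =>
        rw [beta_succ, s_succ, bpat_succ, ← ih t i (by omega) (by omega)]
        simp [beta_succ]

lemma z_pii (n t i : ℕ) (hit : i ≤ t) (htn : t < n) :
    X.comp (X.pii A n (t+1)) (X.z A n i) = X.ppat A n t i := by
  induction n generalizing t i with
  | zero => omega
  | succ n ih =>
    cases i with
    | zero => simp [pii_succ, z_zero, ppat_zero]
    | succ i =>
      cases t with
      | zero => omega
      | succ t =>
        rw [pii_succ, z_succ, ppat_succ, ← ih t i (by omega) (by omega)]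
        simp [pii_succ]

lemma bpat_top (n t : ℕ) (htn : t < n) : X.bpat A n t t = X.beta A n t := by
  induction n generalizing t with
  | zero => omega
  | succ n ih =>
    cases t with
    | zero => rw [bpat_zero, beta_zero, beta_zero, diag_succ]
    | succ t => rw [bpat_succ, beta_succ, ih t (by omega)]

lemma ppat_top (n t : ℕ) (htn : t < n) : X.ppat A n t t = X.pii A n t := by
  induction n generalizing t with
  | zero => omega
  | succ n ih =>
    cases t with
    | zero => rw [ppat_zero, pii_zero, pii_zero, lift_zero_zero]
    | succ t => rw [ppat_succ, pii_succ, ih t (by omega)]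

lemma bpat_w (n t i : ℕ) (hit : i < t) (htn : t < n) :
    X.comp (X.bpat A n t i) (X.w A n i) = X.bpat A n t (i+1) := by
  induction n generalizing t i with
  | zero => omega
  | succ n ih =>
    cases i with
    | zero =>
      cases t with
      | zero => omega
      | succ t =>
        cases n with
        | zero => omega
        | succ n =>
          rw [bpat_zero, beta_succ, w_zero, bpat_succ, bpat_zero]
          simp
    | succ i =>
      cases t with
      | zero => omega
      | succ t =>
        cases n with
        | zero => omega
        | succ n =>
          rw [bpat_succ, w_succ, bpat_succ, ← ih t i (by omega) (by omega)]
          simp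

lemma ppat_w (n t i : ℕ) (hit : i < t) (htn : t < n) :
    X.comp (X.ppat A n t i) (X.w A n i) = X.ppat A n t (i+1) := by
  induction n generalizing t i with
  | zero => omega
  | succ n ih =>
    cases i with
    | zero =>
      cases t with
      | zero => omega
      | succ t =>
        cases n with
        | zero => omega
        | succ n =>
          rw [ppat_zero, pii_succ, w_zero, ppat_succ, ppat_zero]
          simp
    | succ i =>
      cases t with
      | zero => omega
      | succ t =>
        cases n with
        | zero => omega
        | succ n =>
          rw [ppat_succ, w_succ, ppat_succ, ← ih t i (by omega) (by omega)]
          simp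

lemma bubble (m n t : ℕ) (f : X.Hom A B) (htn : t < n) :
    ∀ j i, i + j = t →
      X.comp (X.pt m (X.bpat A n t i) (X.ppat A n t i)) (X.pd m (X.pd n f))
        = X.comp (X.pt m (X.beta A n t) (X.pii A n t)) (X.pd m (X.pd n f)) := by
  intro j
  induction j with
  | zero =>
    intro i hi
    have : i = t := by omega
    subst this
    rw [bpat_top n i htn, ppat_top n i htn]
  | succ j ih =>
    intro i hi
    have step : X.comp (X.pt m (X.bpat A n t i) (X.ppat A n t i)) (X.pd m (X.pd n f))
        = X.comp (X.pt m (X.bpat A n t (i+1)) (X.ppat A n t (i+1))) (X.pd m (X.pd n f)) := by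
      rw [← bpat_w n t i (by omega) htn, ← ppat_w n t i (by omega) htn]
      exact (pt_perm (lin_w n i) (w_pd n i f) m _ _).symm
    rw [step]
    exact ih (i+1) (by omega)

@[simp] lemma comp_pt_assoc {E Y : X.Obj} (x : X.Hom D C) (b d : X.Hom C Y) (m : ℕ)
    (h : X.Hom (X.pow Y m) E) :
    X.comp x (X.comp (X.pt m b d) h) = X.comp (X.pt m (X.comp x b) (X.comp x d)) h := by
  rw [← X.assoc, comp_pt]

lemma substS' (m n i : ℕ) (f : X.Hom A B) (hi : i < n) (q d : X.Hom C (X.pow A n))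
    (y : X.Hom C A) :
    X.comp (X.lift (X.pt m q d) (X.comp (X.comp y (X.e A n i)) (X.pad (X.pow A n) m)))
      (X.D (X.pd m (X.pd n f)))
    = X.comp (X.pt m (X.comp (X.lift q y) (X.s A n i)) (X.comp d (X.z A n i)))
      (X.pd m (X.pd n f)) := by
  have h := congrArg (X.comp (X.lift (X.lift q d) y)) (substS m n i f hi)
  simpa using h

lemma substS'' (m n i : ℕ) (f : X.Hom A B) (hi : i < n) (q d : X.Hom A (X.pow A n)) :
    X.comp (X.lift (X.pt m q d) (X.comp (X.e A n i) (X.pad (X.pow A n) m)))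
      (X.D (X.pd m (X.pd n f)))
    = X.comp (X.pt m (X.comp (X.lift q (X.idm A)) (X.s A n i)) (X.comp d (X.z A n i)))
      (X.pd m (X.pd n f)) := by
  have h := substS' m n i f hi q d (X.idm A)
  simpa using h

/-- The main counting lemma. -/
lemma main (n : ℕ) (f : X.Hom A B) : ∀ (m t : ℕ), t ≤ n →
    X.comp (X.pt m (X.beta A n t) (X.pii A n t)) (X.pd m (X.pd n f))
      = ((t.descFactorial m : ℕ) : k) • X.comp (X.beta A n (t - m)) (X.pd n f) := by
  intro m
  induction m with
  | zero =>
    intro t ht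
    rw [pt_zero, pd_zero', Nat.descFactorial_zero, Nat.cast_one, _root_.one_smul, Nat.sub_zero]
  | succ m ih =>
    intro t ht
    cases t with
    | zero =>
      rw [pd_succ, pii_zero, pt_succ]
      simp [Nat.zero_descFactorial_succ]
    | succ t =>
      have htn : t < n := by omega
      have expand : ∀ u, u ≤ t + 1 →
          X.comp (X.lift (X.pt m (X.beta A n (t+1)) (X.pii A n (t+1)))
              (X.comp (X.pii A n u) (X.pad (X.pow A n) m))) (X.D (X.pd m (X.pd n f)))
            = ((u : ℕ) : k) • X.comp (X.pt m (X.beta A n t) (X.pii A n t))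
                (X.pd m (X.pd n f)) := by
        intro u
        induction u with
        | zero =>
          intro _
          rw [pii_zero]
          simp
        | succ u ihu =>
          intro hu
          have hdir : X.comp (X.pii A n (u+1)) (X.pad (X.pow A n) m)
              = X.comp (X.e A n u) (X.pad (X.pow A n) m)
                + X.comp (X.pii A n u) (X.pad (X.pow A n) m) := by
            rw [pii_split n u, (lin_pad m).ladd]
          rw [hdir, D_dir_add, ihu (by omega),
            substS'' m n u f (by omega), s_beta n t u (by omega) htn,
            z_pii n t u (by omega) htn, bubble m n t f htn (t - u) u (by omega)]
          have hc : ((u + 1 : ℕ) : k) = (u : k) + 1 := by push_cast; ring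
          rw [hc, _root_.add_smul, _root_.one_smul, _root_.add_comm]
      have hmain := expand (t+1) le_rfl
      rw [pd_succ, pt_succ, comp_lift_assoc, lift_fst', lift_snd_assoc, hmain,
        ih t (by omega), smul_smul, ← Nat.cast_mul, ← Nat.succ_descFactorial_succ,
        Nat.succ_sub_succ]

end CDC
namespace QCDC

open CDC

variable {k : Type w} [CommSemiring k] {X : QCDC k}
variable {A B : X.Obj}

lemma M_def (n : ℕ) (f : X.Hom A B) :
    X.M n f = X.invFact n • X.toCDC.comp (X.toCDC.diag A n) (X.toCDC.pd n f) := rfl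

lemma T_zero' (f : X.Hom A B) : X.T 0 f = X.M 0 f := rfl
lemma T_succ' (n : ℕ) (f : X.Hom A B) : X.T (n+1) f = X.T n f + X.M (n+1) f := rfl

lemma M_add (n : ℕ) (f g : X.Hom A B) : X.M n (f + g) = X.M n f + X.M n g := by
  rw [M_def, M_def, M_def, pd_add, comp_add', _root_.smul_add]

lemma M_zero (n : ℕ) : X.M n (0 : X.Hom A B) = 0 := by
  rw [M_def, pd_zero, comp_zero', _root_.smul_zero]

/-- Orthogonality of the Taylor monomials. -/
lemma M_M (m n : ℕ) (f : X.Hom A B) :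
    X.M m (X.M n f) = if m = n then X.M n f else 0 := by
  have hred : X.toCDC.comp (X.toCDC.diag A m)
        (X.toCDC.pd m (X.toCDC.comp (X.toCDC.diag A n) (X.toCDC.pd n f)))
      = ((n.descFactorial m : ℕ) : k) •
          X.toCDC.comp (X.toCDC.beta A n (n - m)) (X.toCDC.pd n f) := by
    rw [pd_comp_lin (lin_diag n) m, ← X.toCDC.assoc, diag_Pm (lin_diag n) m,
      ← beta_self, ← pii_self, main n f m n le_rfl]
  have hM : X.M m (X.M n f)
      = X.invFact m • X.invFact n • ((n.descFactorial m : ℕ) : k) •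
          X.toCDC.comp (X.toCDC.beta A n (n - m)) (X.toCDC.pd n f) := by
    rw [M_def, M_def, pd_smul, comp_smul', ← hred]
  by_cases h : m = n
  · subst h
    rw [if_pos rfl, hM, Nat.descFactorial_self, Nat.sub_self, beta_zero]
    rw [smul_smul, smul_smul, _root_.mul_assoc,
      _root_.mul_comm (X.invFact m) ((m.factorial : ℕ) : k),
      X.invFact_spec m, _root_.mul_one, M_def]
  · rw [if_neg h]
    rcases Nat.lt_or_ge m n with hlt | hge
    · rcases n with _ | n'
      · omega
      · have hs : n' + 1 - m = (n' - m) + 1 := by omega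
        rw [hM, hs, beta_pd_zero, _root_.smul_zero, _root_.smul_zero, _root_.smul_zero]
    · have hlt : n < m := by omega
      rw [hM, Nat.descFactorial_eq_zero_iff_lt.2 hlt, Nat.cast_zero, _root_.zero_smul,
        _root_.smul_zero, _root_.smul_zero]

lemma M_T (i n : ℕ) (f : X.Hom A B) :
    X.M i (X.T n f) = if i ≤ n then X.M i f else 0 := by
  induction n with
  | zero =>
    rw [T_zero', M_M]
    by_cases h : i = 0
    · subst h; simp
    · simp [h, Nat.le_zero]
  | succ n ih =>
    rw [T_succ', M_add, ih, M_M]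
    by_cases h : i ≤ n
    · rw [if_pos h, if_pos (by omega : i ≤ n + 1), if_neg (by omega : ¬ i = n + 1), add_zero]
    · by_cases h2 : i = n + 1
      · subst h2
        rw [if_neg h, if_pos rfl, if_pos le_rfl, _root_.zero_add]
      · rw [if_neg h, if_neg h2, if_neg (by omega : ¬ i ≤ n + 1), add_zero]

end QCDC

/-- `T⁽ʲ⁾[T⁽ⁿ⁾[f]] = T⁽ᵐⁱⁿ⁽ʲ'ⁿ⁾⁾[f]`; in particular `T⁽ⁿ⁾` is idempotent. -/
theorem T_T {k : Type w} [CommSemiring k] (X : QCDC k)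
    {A B : X.Obj} (f : X.Hom A B) (j n : ℕ) :
    X.T j (X.T n f) = X.T (min j n) f := by
  induction j with
  | zero =>
    rw [Nat.zero_min, QCDC.T_zero', QCDC.M_T, if_pos (Nat.zero_le n)]
    rfl
  | succ j ih =>
    rw [QCDC.T_succ', ih, QCDC.M_T]
    by_cases h : j + 1 ≤ n
    · rw [if_pos h, min_eq_left (by omega : j ≤ n), min_eq_left h, QCDC.T_succ']
    · rw [if_neg h, min_eq_right (by omega : n ≤ j), min_eq_right (by omega : n ≤ j + 1),
        add_zero]
end

section
/- In a Cartesian k-differential category over a ℚ≥0-algebra k, the n-th Taylor differential polynomial T^(n)[f] is a D-polynomial with deg(T^(n)[f]) ≤ n. -/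
/-! A self-contained formalization of (Cartesian) `k`-differential categories. -/

universe u v w

namespace Poly

variable {k : Type w} [CommSemiring k]

instance instACM {X : CDC k} {A B : X.Obj} : AddCommMonoid (X.Hom A B) where
  add := X.add
  zero := X.zero
  add_assoc := X.add_assoc
  zero_add := X.zero_add
  add_zero := fun f => (X.add_comm f X.zero).trans (X.zero_add f)
  add_comm := X.add_comm
  nsmul := fun n f => Nat.rec X.zero (fun _ acc => X.add acc f) n
  nsmul_zero := fun _ => rfl
  nsmul_succ := fun _ _ => rfl

lemma add_eq {X : CDC k} {A B : X.Obj} (f g : X.Hom A B) : X.add f g = f + g := rfl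
lemma zero_eq {X : CDC k} {A B : X.Obj} : (X.zero : X.Hom A B) = 0 := rfl

variable {X : CDC k}

lemma comp_add' {A B C : X.Obj} (x : X.Hom A B) (f g : X.Hom B C) :
    X.comp x (f + g) = X.comp x f + X.comp x g := X.comp_add x f g

lemma comp_zero' {A B C : X.Obj} (x : X.Hom A B) :
    X.comp x (0 : X.Hom B C) = 0 := X.comp_zero x

lemma comp_nsmul {A B C : X.Obj} (x : X.Hom A B) (c : ℕ) (f : X.Hom B C) :
    X.comp x (c • f) = c • X.comp x f := by
  induction c with
  | zero => simpa using comp_zero' x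
  | succ n ih => rw [succ_nsmul, succ_nsmul, comp_add', ih]

lemma comp_sum {A B C : X.Obj} {ι : Type*} (x : X.Hom A B) (s : Finset ι)
    (f : ι → X.Hom B C) : X.comp x (∑ i ∈ s, f i) = ∑ i ∈ s, X.comp x (f i) := by
  classical
  induction s using Finset.induction with
  | empty => simpa using comp_zero' x
  | insert _ _ hanotin ih => rw [Finset.sum_insert hanotin, Finset.sum_insert hanotin, comp_add', ih]

lemma comp_lift {A B C D : X.Obj} (x : X.Hom D C) (f : X.Hom C A) (g : X.Hom C B) :
    X.comp x (X.lift f g) = X.lift (X.comp x f) (X.comp x g) := by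
  conv_lhs => rw [← X.lift_unique (X.comp x (X.lift f g))]
  rw [X.assoc, X.assoc, X.lift_fst, X.lift_snd]

lemma lift_add {C A B : X.Obj} (f f' : X.Hom C A) (g g' : X.Hom C B) :
    X.lift f g + X.lift f' g' = X.lift (f + f') (g + g') := by
  conv_lhs => rw [← X.lift_unique (X.lift f g + X.lift f' g')]
  rw [← add_eq, X.fst_add, X.snd_add, X.lift_fst, X.lift_fst, X.lift_snd, X.lift_snd,
    add_eq, add_eq]

lemma zero_comp_fst {C A B : X.Obj} : X.comp (0 : X.Hom C (X.prod A B)) X.fst = 0 := by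
  rw [← zero_eq, ← X.zero_smul (X.zero (A := C) (B := X.prod A B)), X.fst_smul, X.zero_smul,
    zero_eq]

lemma zero_comp_snd {C A B : X.Obj} : X.comp (0 : X.Hom C (X.prod A B)) X.snd = 0 := by
  rw [← zero_eq, ← X.zero_smul (X.zero (A := C) (B := X.prod A B)), X.snd_smul, X.zero_smul,
    zero_eq]

lemma lift_zero_zero {C A B : X.Obj} : X.lift (0 : X.Hom C A) (0 : X.Hom C B) = 0 := by
  conv_rhs => rw [← X.lift_unique (0 : X.Hom C (X.prod A B))]
  rw [zero_comp_fst, zero_comp_snd]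

lemma lift_sum {C A B : X.Obj} {ι : Type*} (s : Finset ι) (f : ι → X.Hom C A)
    (g : ι → X.Hom C B) :
    X.lift (∑ i ∈ s, f i) (∑ i ∈ s, g i) = ∑ i ∈ s, X.lift (f i) (g i) := by
  classical
  induction s using Finset.induction with
  | empty => simpa using lift_zero_zero
  | insert _ _ hanotin ih =>
      rw [Finset.sum_insert hanotin, Finset.sum_insert hanotin, Finset.sum_insert hanotin,
        ← ih, ← lift_add]

lemma D_add {A B : X.Obj} (f g : X.Hom A B) : X.D (f + g) = X.D f + X.D g := by
  have h := X.CD1 1 1 f g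
  rw [X.one_smul, X.one_smul, X.one_smul, X.one_smul] at h
  exact h

lemma D_smul {A B : X.Obj} (r : k) (f : X.Hom A B) : X.D (X.smul r f) = X.smul r (X.D f) := by
  have h := X.CD1 r 0 f f
  rw [X.zero_smul, X.zero_smul] at h
  simp only [zero_eq, add_eq, add_zero] at h
  exact h

lemma D_zero {A B : X.Obj} : X.D (0 : X.Hom A B) = 0 := by
  have h := X.CD1 (0 : k) 0 (0 : X.Hom A B) 0
  rw [X.zero_smul, X.zero_smul] at h
  simp only [zero_eq, add_eq, add_zero] at h
  exact h

lemma D_nsmul {A B : X.Obj} (c : ℕ) (f : X.Hom A B) : X.D (c • f) = c • X.D f := by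
  induction c with
  | zero => simpa using D_zero
  | succ n ih => rw [succ_nsmul, succ_nsmul, D_add, ih]

lemma Ddir_add {A B C : X.Obj} (f : X.Hom A B) (a b c : X.Hom C A) :
    X.comp (X.lift a (b + c)) (X.D f)
      = X.comp (X.lift a b) (X.D f) + X.comp (X.lift a c) (X.D f) := by
  have h := X.CD2 f 1 1 a b c
  rw [X.one_smul, X.one_smul, X.one_smul, X.one_smul, add_eq, add_eq] at h
  exact h

lemma Ddir_zero {A B C : X.Obj} (f : X.Hom A B) (a : X.Hom C A) :
    X.comp (X.lift a 0) (X.D f) = 0 := by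
  have h := X.CD2 f 0 0 a 0 0
  rw [X.zero_smul, X.zero_smul] at h
  simp only [zero_eq, add_eq, add_zero] at h
  exact h

lemma Ddir_sum {A B C : X.Obj} (f : X.Hom A B) (a : X.Hom C A) {ι : Type*} (s : Finset ι)
    (d : ι → X.Hom C A) :
    X.comp (X.lift a (∑ i ∈ s, d i)) (X.D f) = ∑ i ∈ s, X.comp (X.lift a (d i)) (X.D f) := by
  classical
  induction s using Finset.induction with
  | empty => simpa using Ddir_zero f a
  | insert _ _ hanotin ih =>
      rw [Finset.sum_insert hanotin, Finset.sum_insert hanotin, Ddir_add, ih]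

/-- A morphism is linear if its derivative is the second projection followed by itself. -/
def Lin {A B : X.Obj} (s : X.Hom A B) : Prop := X.D s = X.comp X.snd s

lemma lin_id {A : X.Obj} : Lin (X.idm A) := by
  rw [Lin, X.CD3id, X.comp_id]

lemma lin_fst {A B : X.Obj} : Lin (X.fst (A := A) (B := B)) := X.CD3fst
lemma lin_snd {A B : X.Obj} : Lin (X.snd (A := A) (B := B)) := X.CD3snd

lemma lin_zero {A B : X.Obj} : Lin (0 : X.Hom A B) := by
  rw [Lin, D_zero, comp_zero']

lemma lin_lift {C A B : X.Obj} {f : X.Hom C A} {g : X.Hom C B} (hf : Lin f) (hg : Lin g) :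
    Lin (X.lift f g) := by
  rw [Lin, X.CD4, hf, hg, ← comp_lift]

lemma lin_comp {A B C : X.Obj} {f : X.Hom A B} {g : X.Hom B C} (hf : Lin f) (hg : Lin g) :
    Lin (X.comp f g) := by
  rw [Lin, X.CD5, hf, hg, ← X.assoc, X.lift_snd, X.assoc]

lemma chain1 {A B C : X.Obj} {s : X.Hom A B} (hs : Lin s) (g : X.Hom B C) :
    X.D (X.comp s g)
      = X.comp (X.lift (X.comp X.fst s) (X.comp X.snd s)) (X.D g) := by
  rw [X.CD5, hs]

lemma Dlin {A B C : X.Obj} (f : X.Hom A B) (a b d : X.Hom C A) :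
    X.comp (X.lift (X.lift a b) (X.lift (0 : X.Hom C A) d)) (X.D (X.D f))
      = X.comp (X.lift a d) (X.D f) := by
  have h7 := X.CD7 f a b 0 d
  rw [h7]
  have hbd : X.lift b d = X.lift b (0 : X.Hom C A) + X.lift (0 : X.Hom C A) d := by
    rw [lift_add, add_zero, zero_add]
  rw [hbd, Ddir_add]
  have h6 := X.CD6 f a d
  rw [zero_eq] at h6
  rw [h6]
  have h7' := X.CD7 f a 0 b 0
  rw [h7', lift_zero_zero, Ddir_zero, zero_add]

/-! ### Tuples into `pow` -/

/-- `tup n b v : C → A × A^{×ⁿ}` is the map `c ↦ (b c, v 0 c, …, v (n-1) c)`. -/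
def tup {C A : X.Obj} : (n : ℕ) → X.Hom C A → (Fin n → X.Hom C A) → X.Hom C (X.pow A n)
  | 0, b, _ => b
  | n + 1, b, v => X.lift (tup n b (fun i => v i.castSucc)) (v (Fin.last n))

/-- Base-point projection. -/
def pb (A : X.Obj) : (n : ℕ) → X.Hom (X.pow A n) A
  | 0 => X.idm A
  | n + 1 => X.comp X.fst (pb A n)

/-- Direction-slot projections. -/
def pr (A : X.Obj) : (n : ℕ) → Fin n → X.Hom (X.pow A n) A
  | 0, i => i.elim0
  | n + 1, i => Fin.lastCases X.snd (fun j => X.comp X.fst (pr A n j)) i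

lemma pr_last {A : X.Obj} (n : ℕ) : pr (X := X) A (n+1) (Fin.last n) = X.snd := by
  exact Fin.lastCases_last

lemma pr_castSucc {A : X.Obj} (n : ℕ) (j : Fin n) :
    pr (X := X) A (n+1) j.castSucc = X.comp X.fst (pr A n j) := by
  exact Fin.lastCases_castSucc j

lemma comp_tup {C D A : X.Obj} (x : X.Hom D C) (n : ℕ) (b : X.Hom C A)
    (v : Fin n → X.Hom C A) :
    X.comp x (tup n b v) = tup n (X.comp x b) (fun i => X.comp x (v i)) := by
  induction n with
  | zero => rfl
  | succ n ih => rw [tup, tup, comp_lift, ih]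

lemma tup_pb {C A : X.Obj} (n : ℕ) (b : X.Hom C A) (v : Fin n → X.Hom C A) :
    X.comp (tup n b v) (pb A n) = b := by
  induction n with
  | zero => exact X.comp_id b
  | succ n ih => rw [tup, pb, ← X.assoc, X.lift_fst, ih]

lemma tup_pr {C A : X.Obj} (n : ℕ) (b : X.Hom C A) (v : Fin n → X.Hom C A) (i : Fin n) :
    X.comp (tup n b v) (pr A n i) = v i := by
  induction n with
  | zero => exact i.elim0
  | succ n ih =>
      cases i using Fin.lastCases with
      | last => rw [pr_last, tup, X.lift_snd]
      | cast j => rw [pr_castSucc, tup, ← X.assoc, X.lift_fst, ih]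

lemma lift_fst_snd {A B : X.Obj} : X.lift X.fst X.snd = X.idm (X.prod A B) := by
  conv_rhs => rw [← X.lift_unique (X.idm (X.prod A B))]
  rw [X.id_comp, X.id_comp]

lemma tup_proj {A : X.Obj} (n : ℕ) : tup n (pb A n) (pr A n) = X.idm (X.pow A n) := by
  induction n with
  | zero => rfl
  | succ n ih =>
      rw [tup, pr_last, pb]
      have : (fun i : Fin n => pr (X := X) A (n+1) i.castSucc)
          = fun i => X.comp X.fst (pr A n i) := by
        funext i; rw [pr_castSucc]
      rw [this, ← comp_tup, ih, X.comp_id, lift_fst_snd]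

lemma tup_zero {C A : X.Obj} (n : ℕ) :
    tup n (0 : X.Hom C A) (fun _ => (0 : X.Hom C A)) = 0 := by
  induction n with
  | zero => rfl
  | succ n ih => rw [tup, ih, lift_zero_zero]

lemma lin_pb {A : X.Obj} (n : ℕ) : Lin (pb (X := X) A n) := by
  induction n with
  | zero => exact lin_id
  | succ n ih => exact lin_comp lin_fst ih

lemma lin_pr {A : X.Obj} (n : ℕ) (i : Fin n) : Lin (pr (X := X) A n i) := by
  induction n with
  | zero => exact i.elim0
  | succ n ih =>
      cases i using Fin.lastCases with
      | last => rw [pr_last]; exact lin_snd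
      | cast j => rw [pr_castSucc]; exact lin_comp lin_fst (ih j)

lemma lin_tup {C A : X.Obj} (n : ℕ) (b : X.Hom C A) (v : Fin n → X.Hom C A)
    (hb : Lin b) (hv : ∀ i, Lin (v i)) : Lin (tup n b v) := by
  induction n with
  | zero => exact hb
  | succ n ih => exact lin_lift (ih _ (fun i => hv _)) (hv _)

lemma comp_pad {C A : X.Obj} (n : ℕ) (c : X.Hom C A) :
    X.comp c (X.pad A n) = tup n c (fun _ => 0) := by
  induction n with
  | zero => exact X.comp_id c
  | succ n ih =>
      show X.comp c (X.lift (X.pad A n) X.zero) = _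
      rw [comp_lift, ih, zero_eq, comp_zero']
      rfl

lemma pd_succ {A B : X.Obj} (n : ℕ) (f : X.Hom A B) :
    X.pd (n+1) f = X.comp (X.lift X.fst (X.comp X.snd (X.pad A n))) (X.D (X.pd n f)) := rfl

/-- The key structural computation: precomposing `∂⁽ⁿ⁺¹⁾` 's argument map with a tuple. -/
lemma tup_u {C A : X.Obj} (n : ℕ) (b : X.Hom C A) (v : Fin (n+1) → X.Hom C A) :
    X.comp (tup (n+1) b v) (X.lift X.fst (X.comp X.snd (X.pad A n)))
      = X.lift (tup n b (fun i => v i.castSucc)) (tup n (v (Fin.last n)) (fun _ => 0)) := by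
  rw [comp_lift, tup, X.lift_fst, ← X.assoc, X.lift_snd, comp_pad]

lemma tup_sum {C A : X.Obj} (n : ℕ) (v : Fin n → X.Hom C A) :
    tup n (0 : X.Hom C A) v
      = ∑ i : Fin n, tup n 0 (fun j => if j = i then v i else 0) := by
  induction n with
  | zero => simp [tup]
  | succ n ih =>
      rw [Fin.sum_univ_castSucc, tup]
      have h1 : ∀ i : Fin n,
          tup (n+1) (0 : X.Hom C A) (fun j => if j = i.castSucc then v i.castSucc else 0)
            = X.lift (tup n 0 (fun j => if j = i then v i.castSucc else 0)) 0 := by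
        intro i
        show X.lift (tup n 0 fun j => if j.castSucc = i.castSucc then v i.castSucc else 0)
            (if (Fin.last n) = i.castSucc then v i.castSucc else 0) = _
        rw [if_neg (Fin.castSucc_lt_last i).ne',
          show (fun j : Fin n => if j.castSucc = i.castSucc then v i.castSucc else 0)
            = fun j => if j = i then v i.castSucc else 0 from
            funext fun j => by simp [Fin.castSucc_inj]]
      have h2 : tup (n+1) (0 : X.Hom C A) (fun j => if j = Fin.last n then v (Fin.last n) else 0)
          = X.lift 0 (v (Fin.last n)) := by
        show X.lift (tup n 0 fun j => if j.castSucc = Fin.last n then v (Fin.last n) else 0)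
            (if (Fin.last n : Fin (n+1)) = Fin.last n then v (Fin.last n) else 0) = _
        rw [if_pos rfl, show (fun j : Fin n => if j.castSucc = Fin.last n then v (Fin.last n) else 0)
            = fun _ => (0 : X.Hom C A) from funext fun j => if_neg (Fin.castSucc_lt_last j).ne,
          tup_zero n]
      calc X.lift (tup n (0 : X.Hom C A) (fun i => v i.castSucc)) (v (Fin.last n))
          = X.lift (∑ i : Fin n, tup n 0 fun j => if j = i then v i.castSucc else 0)
              (v (Fin.last n)) := by rw [ih]
        _ = X.lift (∑ i : Fin n, tup n 0 fun j => if j = i then v i.castSucc else 0)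
              (0 : X.Hom C A) + X.lift 0 (v (Fin.last n)) := by
            rw [lift_add, add_zero, zero_add]
        _ = (∑ i : Fin n, X.lift (tup n (0 : X.Hom C A)
              (fun j => if j = i then v i.castSucc else 0)) (0 : X.Hom C A))
              + X.lift 0 (v (Fin.last n)) := by
            congr 1
            have hs := lift_sum (X := X) (Finset.univ : Finset (Fin n))
              (fun i => tup n (0 : X.Hom C A) fun j => if j = i then v i.castSucc else 0)
              (fun _ => (0 : X.Hom C A))
            simpa using hs
        _ = _ := by
            rw [← h2]
            congr 1
            exact Finset.sum_congr rfl fun i _ => (h1 i).symm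

/-! ### Basic facts about `pd` -/

lemma pd_add {A B : X.Obj} (n : ℕ) (f g : X.Hom A B) :
    X.pd n (f + g) = X.pd n f + X.pd n g := by
  induction n with
  | zero => rfl
  | succ n ih => rw [pd_succ, pd_succ, pd_succ, ih, D_add, comp_add']

lemma pd_smul {A B : X.Obj} (n : ℕ) (r : k) (f : X.Hom A B) :
    X.pd n (X.smul r f) = X.smul r (X.pd n f) := by
  induction n with
  | zero => rfl
  | succ n ih => rw [pd_succ, pd_succ, ih, D_smul, X.comp_smul]

lemma pd_zero {A B : X.Obj} (n : ℕ) : X.pd n (0 : X.Hom A B) = 0 := by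
  induction n with
  | zero => rfl
  | succ n ih => rw [pd_succ, ih, D_zero, comp_zero']

lemma pd_zero_mono {A B : X.Obj} {n : ℕ} {f : X.Hom A B} (h : X.pd n f = 0) :
    X.pd (n+1) f = 0 := by
  rw [pd_succ, h, D_zero, comp_zero']

/-! ### Linearity of auxiliary maps -/

lemma lin_pad {A : X.Obj} (n : ℕ) : Lin (X.pad A n) := by
  induction n with
  | zero => exact lin_id
  | succ n ih =>
      show Lin (X.lift (X.pad A n) X.zero)
      rw [zero_eq]
      exact lin_lift ih lin_zero

lemma lin_u {A : X.Obj} (n : ℕ) :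
    Lin (X.lift (X.fst (A := X.pow A n) (B := A)) (X.comp X.snd (X.pad A n))) :=
  lin_lift lin_fst (lin_comp lin_snd (lin_pad n))

lemma lift_prodMap {C P Q B : X.Obj} (p q : X.Hom C P) (u : X.Hom P Q)
    (g : X.Hom (X.prod Q Q) B) :
    X.comp (X.lift p q) (X.comp (X.lift (X.comp X.fst u) (X.comp X.snd u)) g)
      = X.comp (X.lift (X.comp p u) (X.comp q u)) g := by
  rw [← X.assoc, comp_lift, ← X.assoc, ← X.assoc, X.lift_fst, X.lift_snd]

/-! ### Delta and update vectors -/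

/-- `dlt i w` has `w` in slot `i` and `0` elsewhere. -/
def dlt {M : Type*} [Zero M] {n : ℕ} (i : Fin n) (w : M) : Fin n → M :=
  fun j => if j = i then w else 0

/-- `upd v i w` replaces slot `i` of `v` by `w`. -/
def upd {M : Type*} {n : ℕ} (v : Fin n → M) (i : Fin n) (w : M) : Fin n → M :=
  fun j => if j = i then w else v j

/-- `swv h v` swaps slots `i` and `i+1` of `v`. -/
def swv {M : Type*} {n i : ℕ} (h : i + 1 < n) (v : Fin n → M) : Fin n → M :=
  fun t => if (t : ℕ) = i then v ⟨i+1, h⟩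
    else if (t : ℕ) = i + 1 then v ⟨i, by omega⟩ else v t

/-! ### The two-fold expansion of `pd` -/

lemma pd_two {A B : X.Obj} (m : ℕ) (f : X.Hom A B) {C : X.Obj} (b : X.Hom C A)
    (v : Fin (m+2) → X.Hom C A) :
    X.comp (tup (m+2) b v) (X.pd (m+2) f)
      = X.comp (X.lift
          (X.lift (tup m b (fun j => v j.castSucc.castSucc))
            (tup m (v (Fin.last m).castSucc) (fun _ => 0)))
          (X.lift (tup m (v (Fin.last (m+1))) (fun _ => 0)) (0 : X.Hom C (X.pow A m))))
        (X.D (X.D (X.pd m f))) := by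
  rw [pd_succ, ← X.assoc, tup_u, pd_succ, chain1 (lin_u m), lift_prodMap, tup_u, tup_u]
  rw [show tup m ((fun _ : Fin (m+1) => (0 : X.Hom C A)) (Fin.last m)) (fun _ => 0)
      = (0 : X.Hom C (X.pow A m)) from tup_zero m]

/-! ### Symmetry of `pd` in its direction slots (adjacent transpositions) -/

theorem pd_sym {A B : X.Obj} (n : ℕ) (f : X.Hom A B) :
    ∀ (C : X.Obj) (b : X.Hom C A) (v : Fin n → X.Hom C A) (i : ℕ) (h : i + 1 < n),
      X.comp (tup n b v) (X.pd n f) = X.comp (tup n b (swv h v)) (X.pd n f) := by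
  induction n with
  | zero => intro C b v i h; omega
  | succ n ih =>
      intro C b v i h
      by_cases htop : n = i + 1
      · -- adjacent-to-top swap, via CD7
        subst htop
        have ea : (fun j : Fin i => swv h v j.castSucc.castSucc)
            = fun j : Fin i => v j.castSucc.castSucc := by
          funext j
          simp only [swv, Fin.coe_castSucc]
          rw [if_neg (by omega), if_neg (by omega)]
        have eb : swv h v ((Fin.last i).castSucc) = v (Fin.last (i+1)) := by
          have hl : Fin.last (i+1) = (⟨i+1, h⟩ : Fin (i+2)) := rfl
          rw [hl]
          simp only [swv, Fin.coe_castSucc, Fin.val_last]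
          simp
        have ec : swv h v (Fin.last (i+1)) = v ((Fin.last i).castSucc) := by
          have hl : (Fin.last i).castSucc = (⟨i, by omega⟩ : Fin (i+2)) := rfl
          rw [hl]
          simp only [swv, Fin.val_last]
          rw [if_neg (by omega)]
          simp
        rw [pd_two, pd_two, X.CD7, ea, eb, ec]
      · -- both slots strictly below the top, via the inductive hypothesis
        have h' : i + 1 < n := by omega
        -- morphism form of the inductive hypothesis
        have hσ : X.pd n f
            = X.comp (tup n (pb A n) (swv h' (pr A n))) (X.pd n f) := by
          have := ih (X.pow A n) (pb A n) (pr A n) i h'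
          rwa [tup_proj, X.id_comp] at this
        have hlinσ : Lin (tup n (pb A n) (swv h' (pr A n))) := by
          apply lin_tup _ _ _ (lin_pb n)
          intro j
          simp only [swv]
          split_ifs <;> exact lin_pr n _
        have hd : X.D (X.pd n f)
            = X.comp (X.lift (X.comp X.fst (tup n (pb A n) (swv h' (pr A n))))
                (X.comp X.snd (tup n (pb A n) (swv h' (pr A n))))) (X.D (X.pd n f)) := by
          conv_lhs => rw [hσ]
          rw [chain1 hlinσ]
        have e1 : X.comp (tup n b (fun j => v j.castSucc))
            (tup n (pb A n) (swv h' (pr A n)))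
              = tup n b (swv h' (fun j => v j.castSucc)) := by
          rw [comp_tup, tup_pb]
          have : (fun j => X.comp (tup n b (fun j => v j.castSucc)) (swv h' (pr A n) j))
              = swv h' (fun j : Fin n => v j.castSucc) := by
            funext j
            simp only [swv]
            split_ifs <;> exact tup_pr n b _ _
          rw [this]
        have e2 : X.comp (tup n (v (Fin.last n)) (fun _ => (0 : X.Hom C A)))
            (tup n (pb A n) (swv h' (pr A n)))
              = tup n (v (Fin.last n)) (fun _ => 0) := by
          rw [comp_tup, tup_pb]
          have : (fun j => X.comp (tup n (v (Fin.last n)) (fun _ => (0 : X.Hom C A)))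
              (swv h' (pr A n) j)) = fun _ : Fin n => (0 : X.Hom C A) := by
            funext j
            simp only [swv]
            split_ifs <;> exact tup_pr n _ _ _
          rw [this]
        have ef : (fun j : Fin n => swv h v j.castSucc)
            = swv h' (fun j : Fin n => v j.castSucc) := by
          funext j
          simp only [swv, Fin.coe_castSucc]
          rcases Nat.lt_trichotomy (j : ℕ) i with hj | hj | hj
          · rw [if_neg (by omega), if_neg (by omega), if_neg (by omega), if_neg (by omega)]
          · rw [if_pos hj, if_pos hj]
            exact congrArg v (Fin.ext (by simp))
          · by_cases hj2 : (j : ℕ) = i + 1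
            · rw [if_neg (by omega), if_pos hj2, if_neg (by omega), if_pos hj2]
              exact congrArg v (Fin.ext (by simp))
            · rw [if_neg (by omega), if_neg (by omega), if_neg (by omega), if_neg (by omega)]
        have eg : swv h v (Fin.last n) = v (Fin.last n) := by
          simp only [swv, Fin.val_last]
          rw [if_neg (by omega), if_neg (by omega)]
        rw [pd_succ, ← X.assoc, ← X.assoc, tup_u, tup_u, ef, eg]
        conv_lhs => rw [hd]
        rw [lift_prodMap, e1, e2]

/-! ### Strong multilinearity of `pd` in its direction slots -/

theorem pd_slot_lin {A B : X.Obj} (n : ℕ) (f : X.Hom A B) :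
    ∀ (C : X.Obj) (b : X.Hom C A) (v : Fin n → X.Hom C A) (i : Fin n) (w : X.Hom C A),
      X.comp (X.lift (tup n b v) (tup n 0 (dlt i w))) (X.D (X.pd n f))
        = X.comp (tup n b (upd v i w)) (X.pd n f) := by
  induction n with
  | zero => intro C b v i w; exact i.elim0
  | succ n ih =>
      intro C b v i w
      rw [pd_succ, chain1 (lin_u n), lift_prodMap, tup_u, tup_u, ← X.assoc, tup_u]
      induction i using Fin.lastCases with
      | last =>
          have ha : (fun j : Fin n => dlt (Fin.last n) w j.castSucc)
              = fun _ => (0 : X.Hom C A) :=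
            funext fun j => by
              simp only [dlt]; exact if_neg (Fin.castSucc_lt_last j).ne
          have hb : dlt (Fin.last n) w (Fin.last n) = w := by simp [dlt]
          have hc : (fun j : Fin n => upd v (Fin.last n) w j.castSucc)
              = fun j : Fin n => v j.castSucc :=
            funext fun j => by
              simp only [upd]; exact if_neg (Fin.castSucc_lt_last j).ne
          have hd2 : upd v (Fin.last n) w (Fin.last n) = w := by simp [upd]
          rw [ha, hb, hc, hd2, tup_zero, Dlin]
      | cast i0 =>
          have ha : (fun j : Fin n => dlt i0.castSucc w j.castSucc) = dlt i0 w :=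
            funext fun j => by simp only [dlt, Fin.castSucc_inj]
          have hb : dlt i0.castSucc w (Fin.last n) = 0 := by
            simp only [dlt]; exact if_neg (Fin.castSucc_lt_last i0).ne'
          have hc : (fun j : Fin n => upd v i0.castSucc w j.castSucc) = upd (fun j => v j.castSucc) i0 w :=
            funext fun j => by simp only [upd, Fin.castSucc_inj]
          have hd2 : upd v i0.castSucc w (Fin.last n) = v (Fin.last n) := by
            simp only [upd]; exact if_neg (Fin.castSucc_lt_last i0).ne'
          rw [ha, hb, hc, hd2, tup_zero, X.CD7]
          -- morphism-level inductive hypothesis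
          have him := ih (X.prod (X.pow A n) A) (X.comp X.fst (pb A n))
            (fun j => X.comp X.fst (pr A n j)) i0 X.snd
          rw [← comp_tup, tup_proj, X.comp_id] at him
          have hmlin : Lin (X.lift (X.fst (A := X.pow A n) (B := A))
              (tup n 0 (dlt i0 X.snd))) := by
            refine lin_lift lin_fst (lin_tup _ _ _ lin_zero fun j => ?_)
            simp only [dlt]
            split_ifs
            · exact lin_snd
            · exact lin_zero
          have hslin : Lin (tup n (X.comp (X.fst (A := X.pow A n) (B := A)) (pb A n))
              (upd (fun j => X.comp X.fst (pr A n j)) i0 X.snd)) := by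
            refine lin_tup _ _ _ (lin_comp lin_fst (lin_pb n)) fun j => ?_
            simp only [upd]
            split_ifs
            · exact lin_snd
            · exact lin_comp lin_fst (lin_pr n j)
          have hD := congrArg X.D him
          rw [chain1 hmlin, chain1 hslin] at hD
          -- evaluating the two linear maps on pairs
          have key : ∀ (p : X.Hom C (X.pow A n)) (c : X.Hom C A),
              X.comp (X.lift p c) (X.lift (X.fst (A := X.pow A n) (B := A))
                (tup n 0 (dlt i0 X.snd))) = X.lift p (tup n 0 (dlt i0 c)) := by
            intro p c
            rw [comp_lift, X.lift_fst, comp_tup, comp_zero']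
            have : (fun j => X.comp (X.lift p c) (dlt i0 X.snd j)) = dlt i0 c := by
              funext j
              simp only [dlt]
              split_ifs
              · exact X.lift_snd p c
              · exact comp_zero' _
            rw [this]
          have key2 : ∀ (p : X.Hom C (X.pow A n)) (c : X.Hom C A),
              X.comp (X.lift p c) (tup n (X.comp (X.fst (A := X.pow A n) (B := A)) (pb A n))
                (upd (fun j => X.comp X.fst (pr A n j)) i0 X.snd))
                = tup n (X.comp p (pb A n)) (upd (fun j => X.comp p (pr A n j)) i0 c) := by
            intro p c
            rw [comp_tup, ← X.assoc, X.lift_fst]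
            have : (fun j => X.comp (X.lift p c)
                (upd (fun j => X.comp X.fst (pr A n j)) i0 X.snd j))
                = upd (fun j => X.comp p (pr A n j)) i0 c := by
              funext j
              simp only [upd]
              split_ifs
              · exact X.lift_snd p c
              · rw [← X.assoc, X.lift_fst]
            rw [this]
          have hPT := key (tup n b (fun j => v j.castSucc)) w
          have hDR := key (tup n (v (Fin.last n)) (fun _ => 0)) 0
          rw [show dlt i0 (0 : X.Hom C A) = fun _ => (0 : X.Hom C A) from
            funext fun j => by simp [dlt], tup_zero] at hDR
          rw [← hPT, ← hDR, ← lift_prodMap, hD, lift_prodMap, key2, key2, tup_pb, tup_pb]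
          have e1 : upd (fun j => X.comp (tup n b fun j => v j.castSucc) (pr A n j)) i0 w
              = upd (fun j : Fin n => v j.castSucc) i0 w := by
            funext j
            simp only [upd]
            split_ifs
            · rfl
            · exact tup_pr n _ _ j
          have e2 : upd (fun j => X.comp (tup n (v (Fin.last n))
              (fun _ => (0 : X.Hom C A))) (pr A n j)) i0 (0 : X.Hom C A)
              = fun _ : Fin n => (0 : X.Hom C A) := by
            funext j
            simp only [upd]
            split_ifs
            · rfl
            · exact tup_pr n _ _ j
          rw [e1, e2]

/-! ### Assorted helpers for the main computation -/

lemma diag_tup {A : X.Obj} (n : ℕ) : X.diag A n = tup n 0 (fun _ => X.idm A) := by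
  induction n with
  | zero => rfl
  | succ n ih =>
      show X.lift (X.diag A n) (X.idm A) = X.lift (tup n 0 (fun _ => X.idm A)) (X.idm A)
      rw [ih]

lemma pad_eq {A : X.Obj} (n : ℕ) : X.pad A n = tup n (X.idm A) (fun _ => 0) := by
  rw [← comp_pad, X.id_comp]

lemma pr_mk_castSucc {A : X.Obj} (m x y : ℕ) (hx : x < m) (hxy : y = x) (hy : y < m+1) :
    pr (X := X) A (m+1) ⟨y, hy⟩ = X.comp X.fst (pr A m ⟨x, hx⟩) := by
  subst hxy
  have e : (⟨y, hy⟩ : Fin (m+1)) = (⟨y, hx⟩ : Fin m).castSucc := Fin.ext rfl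
  rw [e, pr_castSucc]

lemma pr_mk_last {A : X.Obj} (m y : ℕ) (hxy : y = m) (hy : y < m+1) :
    pr (X := X) A (m+1) ⟨y, hy⟩ = X.snd := by
  subst hxy
  have e : (⟨y, hy⟩ : Fin (y+1)) = Fin.last y := Fin.ext rfl
  rw [e, pr_last]

lemma tup_sum_dlt {C A : X.Obj} (n : ℕ) (v : Fin n → X.Hom C A) :
    tup n (0 : X.Hom C A) v = ∑ i : Fin n, tup n 0 (dlt i (v i)) := by
  exact tup_sum n v

lemma sum_ite_lt {M : Type*} [AddCommMonoid M] :
    ∀ (n c : ℕ), c ≤ n → ∀ V : M,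
      (∑ s : Fin n, if (s : ℕ) < c then V else 0) = c • V := by
  intro n
  induction n with
  | zero =>
      intro c hc V
      have : c = 0 := by omega
      subst this
      simp
  | succ n ih =>
      intro c hc V
      rw [Fin.sum_univ_castSucc]
      by_cases h : c ≤ n
      · rw [show (∑ s : Fin n, if ((s.castSucc : Fin (n+1)) : ℕ) < c then V else 0)
            = ∑ s : Fin n, if (s : ℕ) < c then V else 0 from
            Finset.sum_congr rfl fun s _ => by rw [Fin.coe_castSucc]]
        rw [ih c h V, if_neg (by simp [Fin.val_last]; omega), add_zero]
      · have hc1 : c = n + 1 := by omega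
        subst hc1
        rw [show (∑ s : Fin n, if ((s.castSucc : Fin (n+1)) : ℕ) < n + 1 then V else 0)
            = ∑ _s : Fin n, V from
            Finset.sum_congr rfl fun s _ => by rw [if_pos (by simp)]]
        rw [if_pos (by simp [Fin.val_last])]
        rw [Finset.sum_const, Finset.card_univ, Fintype.card_fin, succ_nsmul]

lemma u_prodMap {A Q B' : X.Obj} (m : ℕ) (arr' : X.Hom (X.pow A m) Q)
    (g : X.Hom (X.prod Q Q) B') :
    X.comp (X.lift X.fst (X.comp X.snd (X.pad A m)))
        (X.comp (X.lift (X.comp X.fst arr') (X.comp X.snd arr')) g)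
      = X.comp (X.lift (X.comp X.fst arr')
          (X.comp X.snd (X.comp (X.pad A m) arr'))) g := by
  rw [← X.assoc, comp_lift, ← X.assoc, X.lift_fst, ← X.assoc, X.lift_snd, X.assoc]

/-- Shift slot `s` of `v` up to position `s + d`, moving the slots in between down. -/
def shiftFun {M : Type*} {n : ℕ} (s d : ℕ) (h : s + d < n) (v : Fin n → M) : Fin n → M :=
  fun t => if (t : ℕ) < s then v t
    else if h1 : (t : ℕ) < s + d then v ⟨(t : ℕ) + 1, by omega⟩
    else if (t : ℕ) = s + d then v ⟨s, by omega⟩ else v t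

lemma bubble {A B : X.Obj} (jj : ℕ) (f : X.Hom A B) {C : X.Obj} (b : X.Hom C A) :
    ∀ (d s : ℕ) (h : s + d < jj) (v : Fin jj → X.Hom C A),
      X.comp (tup jj b v) (X.pd jj f)
        = X.comp (tup jj b (shiftFun s d h v)) (X.pd jj f) := by
  intro d
  induction d with
  | zero =>
      intro s h v
      have e : shiftFun s 0 h v = v := by
        funext t
        simp only [shiftFun]
        split_ifs <;> first | rfl | omega | exact congrArg v (Fin.ext (by simp; omega))
      rw [e]
  | succ d ih =>
      intro s h v
      have h1 : s + 1 < jj := by omega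
      rw [pd_sym jj f C b v s h1, ih (s+1) (by omega) (swv h1 v)]
      have e : ∀ pf : s + 1 + d < jj,
          shiftFun (s+1) d pf (swv h1 v) = shiftFun s (d+1) h v := by
        intro pf
        funext t
        simp only [shiftFun, swv]
        split_ifs <;>
          first
            | rfl
            | omega
            | exact congrArg v (Fin.ext (by simp; omega))
            | (exfalso; omega)
      rw [e _]

/-! ### The arrangement vector -/

/-- Arrangement `(0, x, …, x, z₁, …, z_m)` as a vector of projections. -/
def vA {A : X.Obj} (jj m : ℕ) (h : m ≤ jj) : Fin jj → X.Hom (X.pow A m) A :=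
  fun s => if hs : (s : ℕ) < jj - m then pb A m
    else pr A m ⟨(s : ℕ) - (jj - m), by have := s.isLt; omega⟩

/-! ### The main computation -/

theorem main_pd {A B : X.Obj} (jj : ℕ) (f : X.Hom A B) :
    ∀ (m : ℕ) (h : m ≤ jj),
      X.pd m (X.comp (X.diag A jj) (X.pd jj f))
        = (∏ l ∈ Finset.range m, (jj - l)) •
            X.comp (tup jj (0 : X.Hom (X.pow A m) A) (vA jj m h)) (X.pd jj f) := by
  intro m
  induction m with
  | zero =>
      intro h
      have hv : vA (X := X) (A := A) jj 0 h = fun _ => X.idm A := by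
        funext s
        simp only [vA]
        rw [dif_pos (show (s : ℕ) < jj - 0 by have := s.isLt; omega)]
        rfl
      rw [Finset.prod_range_zero, one_nsmul, hv]
      show X.comp (X.diag A jj) (X.pd jj f) = _
      rw [diag_tup]
  | succ m ih =>
      intro h
      have hm : m ≤ jj := by omega
      have harr : Lin (tup jj (0 : X.Hom (X.pow A m) A) (vA jj m hm)) := by
        refine lin_tup _ _ _ lin_zero fun s => ?_
        simp only [vA]
        split_ifs
        · exact lin_pb m
        · exact lin_pr m _
      rw [pd_succ, ih hm, D_nsmul, comp_nsmul, chain1 harr, u_prodMap]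
      have hpt : X.comp (X.fst (A := X.pow A m) (B := A)) (tup jj 0 (vA jj m hm))
          = tup jj 0 (fun t => X.comp X.fst (vA jj m hm t)) := by
        rw [comp_tup, comp_zero']
      have hdir : X.comp (X.snd (A := X.pow A m) (B := A))
          (X.comp (X.pad A m) (tup jj 0 (vA jj m hm)))
          = tup jj 0 (fun s : Fin jj =>
              if (s : ℕ) < jj - m then (X.snd (A := X.pow A m) (B := A)) else 0) := by
        rw [comp_tup, comp_zero']
        have e1 : (fun s => X.comp (X.pad A m) (vA jj m hm s))
            = fun s : Fin jj => if (s : ℕ) < jj - m then X.idm A else 0 := by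
          funext s
          simp only [vA]
          split_ifs
          · rw [pad_eq, tup_pb]
          · rw [pad_eq, tup_pr]
        rw [e1, comp_tup, comp_zero']
        have e2 : (fun s : Fin jj =>
            X.comp X.snd (if (s : ℕ) < jj - m then X.idm A else 0))
            = fun s : Fin jj => if (s : ℕ) < jj - m
                then (X.snd (A := X.pow A m) (B := A)) else 0 := by
          funext s
          split_ifs
          · exact X.comp_id _
          · exact comp_zero' _
        rw [e2]
      rw [hpt, hdir,
        tup_sum_dlt jj (fun s : Fin jj =>
          if (s : ℕ) < jj - m then (X.snd (A := X.pow A m) (B := A)) else 0),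
        Ddir_sum]
      have hterm : ∀ s : Fin jj,
          X.comp (X.lift (tup jj 0 (fun t => X.comp X.fst (vA jj m hm t)))
            (tup jj 0 (dlt s (if (s : ℕ) < jj - m
              then (X.snd (A := X.pow A m) (B := A)) else 0)))) (X.D (X.pd jj f))
          = if (s : ℕ) < jj - m
              then X.comp (tup jj 0 (vA jj (m+1) h)) (X.pd jj f) else 0 := by
        intro s
        by_cases hs : (s : ℕ) < jj - m
        · rw [if_pos hs, if_pos hs, pd_slot_lin jj f,
            bubble jj f 0 (jj - 1 - (s : ℕ)) (s : ℕ) (by have := s.isLt; omega)]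
          have efin : ∀ pf : (s : ℕ) + (jj - 1 - (s : ℕ)) < jj,
              shiftFun (s : ℕ) (jj - 1 - (s : ℕ)) pf
                (upd (fun t => X.comp X.fst (vA jj m hm t)) s X.snd)
              = vA (A := A) jj (m+1) h := by
            intro pf
            funext t
            simp only [shiftFun, upd, vA, Fin.ext_iff]
            split_ifs <;>
              first
              | rfl
              | omega
              | (refine (pr_mk_castSucc m _ _ _ (by omega) _).symm)
              | (refine (pr_mk_last m _ (by omega) _).symm)
              | (refine pr_mk_castSucc m _ _ _ (by omega) _)
              | (refine pr_mk_last m _ (by omega) _)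
          rw [efin _]
        · rw [if_neg hs, if_neg hs]
          have e0 : dlt s (0 : X.Hom (X.pow A (m+1)) A) = fun _ => 0 :=
            funext fun j => by simp [dlt]
          rw [e0, tup_zero, Ddir_zero]
      rw [Finset.sum_congr rfl fun s _ => hterm s,
        sum_ite_lt jj (jj - m) (by omega), smul_smul, Finset.prod_range_succ]

/-- `∂⁽ʲ⁺¹⁾[M⁽ʲ⁾‑type maps] = 0`: the unnormalised Taylor monomial has degree at most `j`. -/
theorem pd_diag_zero {A B : X.Obj} (jj : ℕ) (f : X.Hom A B) :
    X.pd (jj+1) (X.comp (X.diag A jj) (X.pd jj f)) = 0 := by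
  have harr : Lin (tup jj (0 : X.Hom (X.pow A jj) A) (vA jj jj le_rfl)) := by
    refine lin_tup _ _ _ lin_zero fun s => ?_
    simp only [vA]
    split_ifs
    · exact lin_pb jj
    · exact lin_pr jj _
  rw [pd_succ, main_pd jj f jj le_rfl, D_nsmul, comp_nsmul, chain1 harr, u_prodMap]
  have hdir0 : X.comp (X.pad A jj) (tup jj (0 : X.Hom (X.pow A jj) A) (vA jj jj le_rfl))
      = 0 := by
    rw [comp_tup, comp_zero']
    have e1 : (fun s => X.comp (X.pad A jj) (vA jj jj le_rfl s))
        = fun _ : Fin jj => (0 : X.Hom A A) := by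
      funext s
      simp only [vA]
      rw [dif_neg (by omega), pad_eq, tup_pr]
    rw [e1, tup_zero]
  rw [hdir0, comp_zero', Ddir_zero, smul_zero]

/-- Monotonicity: once some derivative vanishes, all later ones do. -/
lemma pd_zero_of_le {A B : X.Obj} {n m : ℕ} (h : n ≤ m) {g : X.Hom A B}
    (hg : X.pd n g = 0) : X.pd m g = 0 := by
  induction m with
  | zero =>
      have : n = 0 := by omega
      subst this; exact hg
  | succ m ih =>
      rcases Nat.lt_or_ge n (m+1) with h1 | h1
      · exact pd_zero_mono (ih (by omega))
      · have : n = m + 1 := by omega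
        subst this; exact hg

end Poly

/-- `T⁽ⁿ⁾[f]` is a `D`-polynomial with `deg (T⁽ⁿ⁾[f]) ≤ n`. -/
theorem T_isPoly_deg_le {k : Type w} [CommSemiring k] (X : QCDC k)
    {A B : X.Obj} (f : X.Hom A B) (n : ℕ) :
    X.toCDC.IsPoly (X.T n f) ∧ X.toCDC.deg (X.T n f) ≤ n := by
  have hM : ∀ j : ℕ, X.toCDC.pd (j+1) (X.M j f) = X.toCDC.zero := by
    intro j
    show X.toCDC.pd (j+1)
      (X.toCDC.smul (X.invFact j) (X.toCDC.comp (X.toCDC.diag A j) (X.toCDC.pd j f)))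
      = X.toCDC.zero
    rw [Poly.pd_smul, Poly.pd_diag_zero, ← Poly.zero_eq, X.toCDC.smul_zero]
  have hT : ∀ m : ℕ, X.toCDC.pd (m+1) (X.T m f) = X.toCDC.zero := by
    intro m
    induction m with
    | zero => exact hM 0
    | succ m ih =>
        show X.toCDC.pd (m+2) (X.toCDC.add (X.T m f) (X.M (m+1) f)) = X.toCDC.zero
        rw [Poly.add_eq, Poly.pd_add, Poly.pd_zero_of_le (by omega) ih, hM (m+1)]
        exact add_zero _
  refine ⟨⟨n, hT n⟩, ?_⟩
  exact Nat.sInf_le (hT n)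
end

section
/- Let X be a Cartesian k-differential category whose homsets carry metrics b making composition, the k-linear structure, pairing, and the differential combinator non-expansive. If for every map f the sequence (T^(n)[f]) converges to f with respect to b, then X is Taylor: any two maps with the same Taylor differential monomials are equal. -/
/-! A self-contained formalization of (Cartesian) `k`-differential categories. -/

universe u v w

theorem eq_of_tendsto_of_tendsto {α : Type*} (d : α → α → ℝ)
    (d_nonneg : ∀ x y, 0 ≤ d x y) (d_eq_zero : ∀ x y, d x y = 0 → x = y)
    (d_symm : ∀ x y, d x y = d y x) (d_triangle : ∀ x y z, d x z ≤ d x y + d y z)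
    {u : ℕ → α} {x y : α}
    (hx : ∀ ε : ℝ, 0 < ε → ∃ N : ℕ, ∀ n : ℕ, N ≤ n → d (u n) x < ε)
    (hy : ∀ ε : ℝ, 0 < ε → ∃ N : ℕ, ∀ n : ℕ, N ≤ n → d (u n) y < ε) :
    x = y := by
  refine d_eq_zero x y (le_antisymm (le_of_forall_pos_lt_add fun ε hε => ?_) (d_nonneg x y))
  obtain ⟨N₁, h₁⟩ := hx (ε / 2) (half_pos hε)
  obtain ⟨N₂, h₂⟩ := hy (ε / 2) (half_pos hε)
  set n := max N₁ N₂
  calc d x y ≤ d x (u n) + d (u n) y := d_triangle _ _ _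
    _ = d (u n) x + d (u n) y := by rw [d_symm x]
    _ < ε / 2 + ε / 2 := add_lt_add (h₁ n (le_max_left _ _)) (h₂ n (le_max_right _ _))
    _ = 0 + ε := by ring

namespace QCDC

theorem T_eq_T_of_M_eq_M {k : Type w} [CommSemiring k] (X : QCDC k) {A B : X.Obj}
    {f g : X.Hom A B} (hM : ∀ n : ℕ, X.M n f = X.M n g) (n : ℕ) : X.T n f = X.T n g := by
  induction n with
  | zero => exact hM 0
  | succ n ih => rw [T, T, ih, hM (n + 1)]

end QCDC

theorem metric_convergence_implies_taylor_general {k : Type w} [CommSemiring k] (X : QCDC k)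
    (b : ∀ {A B : X.Obj}, X.Hom A B → X.Hom A B → ℝ)
    (b_nonneg : ∀ {A B : X.Obj} (f g : X.Hom A B), 0 ≤ b f g)
    (b_eq_zero : ∀ {A B : X.Obj} (f g : X.Hom A B), b f g = 0 → f = g)
    (b_symm : ∀ {A B : X.Obj} (f g : X.Hom A B), b f g = b g f)
    (b_triangle : ∀ {A B : X.Obj} (f g h : X.Hom A B), b f h ≤ b f g + b g h)
    (hconv : ∀ {A B : X.Obj} (f : X.Hom A B) (ε : ℝ), 0 < ε →
      ∃ N : ℕ, ∀ n : ℕ, N ≤ n → b (X.T n f) f < ε) :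
    X.Taylor := by
  intro A B f g hM
  exact eq_of_tendsto_of_tendsto b b_nonneg b_eq_zero b_symm b_triangle (hconv f)
    (by simpa only [X.T_eq_T_of_M_eq_M hM] using hconv g)

/-- If a Cartesian `k`-differential category is enriched in metric
spaces (with composition, the `k`-linear structure, pairing, and `D` non-expansive)
and the Taylor polynomials of every map converge to it with respect to the metric,
then the category is Taylor. -/
theorem metric_convergence_implies_taylor {k : Type w} [CommSemiring k] (X : QCDC k)
    (b : ∀ {A B : X.Obj}, X.Hom A B → X.Hom A B → ℝ)
    (b_nonneg : ∀ {A B : X.Obj} (f g : X.Hom A B), 0 ≤ b f g)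
    (b_self : ∀ {A B : X.Obj} (f : X.Hom A B), b f f = 0)
    (b_eq_zero : ∀ {A B : X.Obj} (f g : X.Hom A B), b f g = 0 → f = g)
    (b_symm : ∀ {A B : X.Obj} (f g : X.Hom A B), b f g = b g f)
    (b_triangle : ∀ {A B : X.Obj} (f g h : X.Hom A B), b f h ≤ b f g + b g h)
    (b_comp : ∀ {A B C : X.Obj} (f₁ f₂ : X.Hom A B) (g₁ g₂ : X.Hom B C),
      b (X.comp f₁ g₁) (X.comp f₂ g₂) ≤ max (b g₁ g₂) (b f₁ f₂))
    (b_linear : ∀ {A B : X.Obj} (r s : k) (f₁ f₂ g₁ g₂ : X.Hom A B),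
      b (X.add (X.smul r f₁) (X.smul s g₁)) (X.add (X.smul r f₂) (X.smul s g₂))
        ≤ max (b f₁ f₂) (b g₁ g₂))
    (b_pair : ∀ {C B₀ B₁ : X.Obj} (f₀ g₀ : X.Hom C B₀) (f₁ g₁ : X.Hom C B₁),
      b (X.lift f₀ f₁) (X.lift g₀ g₁) ≤ max (b f₀ g₀) (b f₁ g₁))
    (b_D : ∀ {A B : X.Obj} (f g : X.Hom A B), b (X.D f) (X.D g) ≤ b f g)
    (hconv : ∀ {A B : X.Obj} (f : X.Hom A B) (ε : ℝ), 0 < ε →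
      ∃ N : ℕ, ∀ n : ℕ, N ≤ n → b (X.T n f) f < ε) :
    X.Taylor :=
  metric_convergence_implies_taylor_general X b b_nonneg b_eq_zero b_symm b_triangle hconv
end
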